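/- arXiv:gr-qc/0508014 — 4 statements merged into one kernel-verified Lean document; each statement's English description precedes it below -/
import Mathlib

section
/- Let A ∈ ℝ^{m×m} be a symmetric matrix and B ∈ ℝ^{p×m} a matrix such that A(Ker B) ⊆ Ker B. Then the kernel of the symmetric (m+p)×(m+p) block matrix Ā = [[A, Bᵀ],[B, 0]] equals (Ker A ∩ Ker B) × Ker Bᵀ; that is, Ā(u,z)ᵀ = 0 if and only if A u = 0, B u = 0, and Bᵀ z = 0. -/
open Matrix


/-- For a symmetric matrix `A ∈ ℝ^{m×m}` and `B ∈ ℝ^{p×m}` with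
`A (Ker B) ⊆ Ker B`, the kernel of the symmetric block matrix
`Ā = [[A, Bᵀ],[B, 0]]` (acting by `Ā(u,z) = (A u + Bᵀ z, B u)`) equals
`(Ker A ∩ Ker B) × Ker Bᵀ`. -/
theorem kernel_of_extended_block_matrix
    (m p : ℕ) (A : Matrix (Fin m) (Fin m) ℝ) (B : Matrix (Fin p) (Fin m) ℝ)
    (hA : A.IsSymm)
    (hinv : ∀ u : Fin m → ℝ, B.mulVec u = 0 → B.mulVec (A.mulVec u) = 0) :
    ∀ (u : Fin m → ℝ) (z : Fin p → ℝ),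
      (A.mulVec u + B.transpose.mulVec z = 0 ∧ B.mulVec u = 0) ↔
        (A.mulVec u = 0 ∧ B.mulVec u = 0 ∧ B.transpose.mulVec z = 0) := by
  intro u z
  constructor
  · rintro ⟨h1, h2⟩
    have hBAu : B.mulVec (A.mulVec u) = 0 := hinv u h2
    set w := B.transpose.mulVec z with hw
    have hAu : A.mulVec u = -w := eq_neg_of_add_eq_zero_left h1
    have hBw : B.mulVec w = 0 := by
      have : w = -(A.mulVec u) := by rw [hAu, neg_neg]
      rw [this, Matrix.mulVec_neg, hBAu, neg_zero]
    have hww : w ⬝ᵥ w = 0 := by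
      calc w ⬝ᵥ w = B.vecMul z ⬝ᵥ w := by rw [hw, Matrix.mulVec_transpose]
        _ = z ⬝ᵥ B.mulVec w := (Matrix.dotProduct_mulVec z B w).symm
        _ = 0 := by rw [hBw, dotProduct_zero]
    have hw0 : w = 0 := by
      rwa [dotProduct_self_eq_zero] at hww
    refine ⟨?_, h2, hw0⟩
    rw [hAu, hw0, neg_zero]
  · rintro ⟨h1, h2, h3⟩
    exact ⟨by rw [h1, h3, add_zero], h2⟩
end

section
/- Let A ∈ ℝ^{m×m} be symmetric with orthonormal eigenbasis e₁,…,e_m and corresponding eigenvalues λ₁ = … = λ_{l₀} = 0, λ_{l₀+1},…,λ_{l₀+l₋} < 0, and λ_{l₀+l₋+1},…,λ_m > 0, and set l₊ = m − l₀ − l₋. A subspace N ⊆ ℝ^m is maximal nonnegative for A if and only if there exists an l₋×l₊ real matrix M such that N = { v ∈ ℝ^m : ⟨e_{l₀+r}, v⟩ = Σ_{s=1}^{l₊} M_{rs} ⟨e_{l₀+l₋+s}, v⟩ for r = 1,…,l₋ }, and the matrix D₋ M D₊⁻¹ has operator norm at most 1, where D₋ = diag(√|λ_{l₀+1}|,…,√|λ_{l₀+l₋}|)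 and D₊ = diag(√λ_{l₀+l₋+1},…,√λ_m). -/
/-!
In coordinates `x = (x₀, x₋, x₊)` with respect to the eigenbasis,
`⟪x, A x⟫ = ∑ λ₊ x₊² - ∑ |λ₋| x₋²`. On a nonnegative subspace `x₊ = 0` forces `x₋ = 0`, so
`(x₀, x₊)` is injective there and its dimension is at most `l₀ + l₊`. The graph
`{x₋ = M x₊}` has dimension at least `l₀ + l₊`, so it is maximal as soon as it is nonnegative,
which means `∑ |λ₋| (M c)² ≤ ∑ λ₊ c²` for all `c`, i.e. `‖D₋ M D₊⁻¹‖ ≤ 1`.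

Conversely let `N` be maximal. If `x₊(N)` lay in the kernel of a functional `f ≠ 0`, the vector
`w` with `x₊(w) = f / λ₊` would satisfy `⟪v, A w⟫ = f (x₊ v) = 0` on `N` and `⟪w, A w⟫ ≥ 0`;
then `N + ℝ w` is nonnegative, so `w ∈ N`, and `f (x₊ w) = ∑ f_s² / λ_s = 0` forces `f = 0`.
Hence `x₊` maps `N` onto `ℝ^{l₊}`, and since it determines `x₋` on `N`, `N` lies in a graph
`{x₋ = M x₊}` which is again nonnegative, hence equal to `N` by maximality.
-/

open scoped RealInnerProductSpace Matrix

section General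

variable {E : Type*} [NormedAddCommGroup E] [InnerProductSpace ℝ E]

def IsNonnegSubspace (A : E →ₗ[ℝ] E) (N : Submodule ℝ E) : Prop :=
  ∀ x ∈ N, 0 ≤ ⟪x, A x⟫

def IsMaximalNonnegSubspace (A : E →ₗ[ℝ] E) (N : Submodule ℝ E) : Prop :=
  IsNonnegSubspace A N ∧ ∀ N', IsNonnegSubspace A N' → N ≤ N' → N' = N

variable {ι : Type*} [Fintype ι] {A : E →ₗ[ℝ] E} {lam : ι → ℝ}

theorem OrthonormalBasis.inner_apply_eq_sum_of_apply_eq_smul (b : OrthonormalBasis ι ℝ E)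
    (heig : ∀ i, A (b i) = lam i • b i) (u v : E) :
    ⟪u, A v⟫ = ∑ i, lam i * ⟪b i, u⟫ * ⟪b i, v⟫ := by
  conv_lhs => rw [← b.sum_repr' v]
  simp only [map_sum, map_smul, heig, smul_smul, inner_sum, real_inner_smul_right,
    real_inner_comm u]
  exact Finset.sum_congr rfl fun i _ => by ring

theorem OrthonormalBasis.isSymmetric_of_apply_eq_smul (b : OrthonormalBasis ι ℝ E)
    (heig : ∀ i, A (b i) = lam i • b i) : A.IsSymmetric := fun u v => by
  rw [real_inner_comm, b.inner_apply_eq_sum_of_apply_eq_smul heig,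
    b.inner_apply_eq_sum_of_apply_eq_smul heig]
  exact Finset.sum_congr rfl fun i _ => by ring

theorem OrthonormalBasis.inner_repr_symm_toLp (b : OrthonormalBasis ι ℝ E) (y : ι → ℝ) (i : ι) :
    ⟪b i, b.repr.symm (WithLp.toLp 2 y)⟫ = y i := by
  rw [← b.repr_apply_apply, LinearIsometryEquiv.apply_symm_apply]

namespace IsMaximalNonnegSubspace

variable {N : Submodule ℝ E}

theorem mem_of_forall_inner_apply_eq_zero (hN : IsMaximalNonnegSubspace A N)
    (hA : A.IsSymmetric) {w : E} (hw : 0 ≤ ⟪w, A w⟫) (horth : ∀ v ∈ N, ⟪v, A w⟫ = 0) :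
    w ∈ N := by
  have hsup : IsNonnegSubspace A (N ⊔ ℝ ∙ w) := by
    intro x hx
    obtain ⟨v, hv, _, ht, rfl⟩ := Submodule.mem_sup.mp hx
    obtain ⟨t, rfl⟩ := Submodule.mem_span_singleton.mp ht
    have hwv : ⟪w, A v⟫ = 0 := by rw [← hA, real_inner_comm, horth v hv]
    simp only [map_add, map_smul, inner_add_left, inner_add_right, real_inner_smul_left,
      real_inner_smul_right, horth v hv, hwv]
    nlinarith [hN.1 v hv, mul_nonneg (mul_self_nonneg t) hw]
  rw [← hN.2 _ hsup le_sup_left]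
  exact Submodule.mem_sup_right (Submodule.mem_span_singleton_self w)

end IsMaximalNonnegSubspace

end General

theorem Matrix.opNorm_toEuclideanLin_scaled_le_one_iff {m n : Type*} [Fintype m] [Fintype n]
    [DecidableEq n] {α : m → ℝ} {β : n → ℝ} (hα : ∀ r, 0 ≤ α r) (hβ : ∀ s, 0 < β s)
    (M : Matrix m n ℝ) :
    ‖LinearMap.toContinuousLinearMap (Matrix.toEuclideanLin
        (Matrix.of fun r s => Real.sqrt (α r) * M r s / Real.sqrt (β s)))‖ ≤ 1 ↔
      ∀ c, ∑ r, α r * (M *ᵥ c) r ^ 2 ≤ ∑ s, β s * c s ^ 2 := by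
  set T := LinearMap.toContinuousLinearMap (Matrix.toEuclideanLin
    (Matrix.of fun r s => Real.sqrt (α r) * M r s / Real.sqrt (β s)))
  have hsqrt : ∀ s, Real.sqrt (β s) ≠ 0 := fun s => (Real.sqrt_pos.2 (hβ s)).ne'
  let D : (n → ℝ) → EuclideanSpace ℝ n := fun c => WithLp.toLp 2 fun s => Real.sqrt (β s) * c s
  have hD : Function.Surjective D := fun x =>
    ⟨fun s => x s / Real.sqrt (β s), by ext s; simp [D, mul_div_cancel₀ _ (hsqrt s)]⟩
  have hTD : ∀ c, ‖T (D c)‖ ^ 2 = ∑ r, α r * (M *ᵥ c) r ^ 2 := fun c => by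
    rw [EuclideanSpace.real_norm_sq_eq]
    refine Finset.sum_congr rfl fun r _ => ?_
    have hrow : ((Matrix.of fun r s => Real.sqrt (α r) * M r s / Real.sqrt (β s)) *ᵥ
        fun s => Real.sqrt (β s) * c s) r = Real.sqrt (α r) * (M *ᵥ c) r := by
      simp only [Matrix.mulVec, dotProduct, Matrix.of_apply, Finset.mul_sum]
      exact Finset.sum_congr rfl fun s _ => by field_simp [hsqrt s]
    simp only [T, D, LinearMap.coe_toContinuousLinearMap', Matrix.toLpLin_toLp,
      Matrix.toLin'_apply, hrow, mul_pow, Real.sq_sqrt (hα r)]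
  have hD2 : ∀ c, ‖D c‖ ^ 2 = ∑ s, β s * c s ^ 2 := fun c => by
    rw [EuclideanSpace.real_norm_sq_eq]
    exact Finset.sum_congr rfl fun s _ => by simp [D, mul_pow, Real.sq_sqrt (hβ s).le]
  rw [ContinuousLinearMap.opNorm_le_iff zero_le_one, hD.forall]
  refine forall_congr' fun c => ?_
  rw [one_mul, ← sq_le_sq₀ (norm_nonneg _) (norm_nonneg _), hTD, hD2]

noncomputable section Signature

-- `(ιz ⊕ ιn) ⊕ ιp` indexes the eigenvectors of eigenvalue zero, negative and positive; for
-- `Fin l₀`, `Fin lneg`, `Fin lpos` it is `Fin (l₀ + lneg + lpos)` through `finSumFinEquiv`.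
variable {E : Type*} [NormedAddCommGroup E] [InnerProductSpace ℝ E]
  {ιz ιn ιp : Type*} [Fintype ιz] [Fintype ιn] [Fintype ιp]
  (b : OrthonormalBasis ((ιz ⊕ ιn) ⊕ ιp) ℝ E)

namespace OrthonormalBasis

def zeroCoords : E →ₗ[ℝ] ιz → ℝ := LinearMap.pi fun k => innerₛₗ ℝ (b (.inl (.inl k)))

def negCoords : E →ₗ[ℝ] ιn → ℝ := LinearMap.pi fun r => innerₛₗ ℝ (b (.inl (.inr r)))

def posCoords : E →ₗ[ℝ] ιp → ℝ := LinearMap.pi fun s => innerₛₗ ℝ (b (.inr s))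

@[simp] theorem zeroCoords_apply (v : E) (k : ιz) : b.zeroCoords v k = ⟪b (.inl (.inl k)), v⟫ :=
  rfl

@[simp] theorem negCoords_apply (v : E) (r : ιn) : b.negCoords v r = ⟪b (.inl (.inr r)), v⟫ :=
  rfl

@[simp] theorem posCoords_apply (v : E) (s : ιp) : b.posCoords v s = ⟪b (.inr s), v⟫ := rfl

def graphSubspace (M : Matrix ιn ιp ℝ) : Submodule ℝ E :=
  LinearMap.ker (b.negCoords - M.mulVecLin ∘ₗ b.posCoords)

theorem mem_graphSubspace {M : Matrix ιn ιp ℝ} {v : E} :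
    v ∈ b.graphSubspace M ↔ b.negCoords v = M *ᵥ b.posCoords v := by
  simp [graphSubspace, sub_eq_zero]

theorem eq_zero_of_coords_eq_zero {v : E} (hz : b.zeroCoords v = 0) (hn : b.negCoords v = 0)
    (hp : b.posCoords v = 0) : v = 0 := by
  rw [← b.sum_repr' v, Fintype.sum_sum_type, Fintype.sum_sum_type]
  simp_all [funext_iff]

theorem exists_coords_eq (z : ιz → ℝ) (n : ιn → ℝ) (p : ιp → ℝ) :
    ∃ v : E, b.zeroCoords v = z ∧ b.negCoords v = n ∧ b.posCoords v = p := by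
  refine ⟨b.repr.symm (WithLp.toLp 2 (Sum.elim (Sum.elim z n) p)), ?_, ?_, ?_⟩ <;>
    funext <;> simp [b.inner_repr_symm_toLp]

variable {A : E →ₗ[ℝ] E} {lam : (ιz ⊕ ιn) ⊕ ιp → ℝ}

theorem inner_apply_eq_sum_neg_add_sum_pos (heig : ∀ i, A (b i) = lam i • b i)
    (hzero : ∀ k, lam (.inl (.inl k)) = 0) (u v : E) :
    ⟪u, A v⟫ = ∑ r, lam (.inl (.inr r)) * b.negCoords u r * b.negCoords v r
      + ∑ s, lam (.inr s) * b.posCoords u s * b.posCoords v s := by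
  simp [b.inner_apply_eq_sum_of_apply_eq_smul heig, Fintype.sum_sum_type, hzero]

theorem inner_apply_self_eq_sub (heig : ∀ i, A (b i) = lam i • b i)
    (hzero : ∀ k, lam (.inl (.inl k)) = 0) (hneg : ∀ r, lam (.inl (.inr r)) ≤ 0) (v : E) :
    ⟪v, A v⟫ = ∑ s, lam (.inr s) * b.posCoords v s ^ 2
      - ∑ r, |lam (.inl (.inr r))| * b.negCoords v r ^ 2 := by
  simp only [b.inner_apply_eq_sum_neg_add_sum_pos heig hzero, abs_of_nonpos (hneg _), neg_mul,
    Finset.sum_neg_distrib, sub_neg_eq_add, add_comm, sq, mul_assoc]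

theorem negCoords_eq_zero_of_posCoords_eq_zero (heig : ∀ i, A (b i) = lam i • b i)
    (hzero : ∀ k, lam (.inl (.inl k)) = 0) (hneg : ∀ r, lam (.inl (.inr r)) < 0) {v : E}
    (hv : 0 ≤ ⟪v, A v⟫) (hp : b.posCoords v = 0) : b.negCoords v = 0 := by
  rw [b.inner_apply_self_eq_sub heig hzero (fun r => (hneg r).le), hp] at hv
  have hterm : ∀ r ∈ Finset.univ, 0 ≤ |lam (.inl (.inr r))| * b.negCoords v r ^ 2 :=
    fun r _ => by positivity
  have hsum := (Finset.sum_eq_zero_iff_of_nonneg hterm).mp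
    (le_antisymm (by simpa using hv) (Finset.sum_nonneg hterm))
  funext r
  simpa [(hneg r).ne] using hsum r (Finset.mem_univ r)

theorem finrank_le_of_isNonnegSubspace (heig : ∀ i, A (b i) = lam i • b i)
    (hzero : ∀ k, lam (.inl (.inl k)) = 0) (hneg : ∀ r, lam (.inl (.inr r)) < 0)
    {N : Submodule ℝ E} (hN : IsNonnegSubspace A N) :
    Module.finrank ℝ N ≤ Fintype.card ιz + Fintype.card ιp := by
  have hinj : Function.Injective ((b.zeroCoords.prod b.posCoords).domRestrict N) := by
    rw [← LinearMap.ker_eq_bot, LinearMap.ker_eq_bot']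
    rintro ⟨v, hv⟩ hv0
    obtain ⟨hz, hp⟩ := Prod.ext_iff.mp hv0
    have hn := b.negCoords_eq_zero_of_posCoords_eq_zero heig hzero hneg (hN v hv) hp
    exact Subtype.ext (b.eq_zero_of_coords_eq_zero hz hn hp)
  simpa using LinearMap.finrank_le_finrank_of_injective hinj

theorem card_add_card_le_finrank_graphSubspace (M : Matrix ιn ιp ℝ) :
    Fintype.card ιz + Fintype.card ιp ≤ Module.finrank ℝ (b.graphSubspace M) := by
  have := Module.Finite.of_basis b.toBasis
  set L := b.negCoords - M.mulVecLin ∘ₗ b.posCoords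
  have hrank := L.finrank_range_add_finrank_ker
  have hrange := Submodule.finrank_le (LinearMap.range L)
  rw [Module.finrank_eq_card_basis b.toBasis] at hrank
  simp only [Module.finrank_fintype_fun_eq_card, Fintype.card_sum] at hrank hrange
  change _ ≤ Module.finrank ℝ (LinearMap.ker L)
  omega

theorem isNonnegSubspace_graphSubspace_iff (heig : ∀ i, A (b i) = lam i • b i)
    (hzero : ∀ k, lam (.inl (.inl k)) = 0) (hneg : ∀ r, lam (.inl (.inr r)) ≤ 0)
    (M : Matrix ιn ιp ℝ) :
    IsNonnegSubspace A (b.graphSubspace M) ↔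
      ∀ c, ∑ r, |lam (.inl (.inr r))| * (M *ᵥ c) r ^ 2 ≤ ∑ s, lam (.inr s) * c s ^ 2 := by
  simp only [IsNonnegSubspace, b.inner_apply_self_eq_sub heig hzero hneg, sub_nonneg]
  constructor
  · intro h c
    obtain ⟨v, -, hn, hp⟩ := b.exists_coords_eq 0 (M *ᵥ c) c
    have hv := h v (by rw [mem_graphSubspace, hn, hp])
    rwa [hn, hp] at hv
  · intro h v hv
    rw [(b.mem_graphSubspace).mp hv]
    exact h _

theorem isMaximalNonnegSubspace_graphSubspace (heig : ∀ i, A (b i) = lam i • b i)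
    (hzero : ∀ k, lam (.inl (.inl k)) = 0) (hneg : ∀ r, lam (.inl (.inr r)) < 0)
    {M : Matrix ιn ιp ℝ} (hM : IsNonnegSubspace A (b.graphSubspace M)) :
    IsMaximalNonnegSubspace A (b.graphSubspace M) := by
  have := Module.Finite.of_basis b.toBasis
  refine ⟨hM, fun N' hN' hle => (Submodule.eq_of_le_of_finrank_le hle ?_).symm⟩
  exact (b.finrank_le_of_isNonnegSubspace heig hzero hneg hN').trans
    (b.card_add_card_le_finrank_graphSubspace M)

theorem map_posCoords_eq_top_of_isMaximalNonnegSubspace (heig : ∀ i, A (b i) = lam i • b i)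
    (hzero : ∀ k, lam (.inl (.inl k)) = 0) (hpos : ∀ s, 0 < lam (.inr s))
    {N : Submodule ℝ E} (hN : IsMaximalNonnegSubspace A N) : N.map b.posCoords = ⊤ := by
  classical
  by_contra hne
  obtain ⟨f, hf0, hNf⟩ := (N.map b.posCoords).exists_le_ker_of_lt_top (lt_top_iff_ne_top.2 hne)
  set z : ιp → ℝ := fun s => f fun j => if s = j then 1 else 0
  have hf : ∀ c, f c = ∑ s, z s * c s := fun c => by
    simp only [f.pi_apply_eq_sum_univ c, smul_eq_mul, mul_comm, z]
  obtain ⟨w, -, hwn, hwp⟩ := b.exists_coords_eq 0 0 fun s => z s / lam (.inr s)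
  have hAw : ∀ v, ⟪v, A w⟫ = f (b.posCoords v) := fun v => by
    rw [b.inner_apply_eq_sum_neg_add_sum_pos heig hzero, hwn, hwp, hf]
    simp only [Pi.zero_apply, mul_zero, Finset.sum_const_zero, zero_add]
    exact Finset.sum_congr rfl fun s _ => by field_simp [(hpos s).ne']
  have hfw : f (b.posCoords w) = ∑ s, z s ^ 2 / lam (.inr s) := by
    rw [hf, hwp]; exact Finset.sum_congr rfl fun s _ => by ring
  have hterm : ∀ s ∈ Finset.univ, 0 ≤ z s ^ 2 / lam (.inr s) := fun s _ =>
    div_nonneg (sq_nonneg _) (hpos s).le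
  have hwN := hN.mem_of_forall_inner_apply_eq_zero (b.isSymmetric_of_apply_eq_smul heig)
    (by rw [hAw, hfw]; exact Finset.sum_nonneg hterm)
    (fun v hv => by rw [hAw]; exact hNf (Submodule.mem_map_of_mem hv))
  have hz : ∀ s, z s = 0 := fun s => by
    have := (Finset.sum_eq_zero_iff_of_nonneg hterm).mp
      (by rw [← hfw]; exact hNf (Submodule.mem_map_of_mem hwN)) s (Finset.mem_univ s)
    simpa [(hpos s).ne'] using this
  exact hf0 (LinearMap.ext fun c => by simp [hf, hz])

theorem exists_eq_graphSubspace_of_isMaximalNonnegSubspace (heig : ∀ i, A (b i) = lam i • b i)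
    (hzero : ∀ k, lam (.inl (.inl k)) = 0) (hneg : ∀ r, lam (.inl (.inr r)) < 0)
    (hpos : ∀ s, 0 < lam (.inr s)) {N : Submodule ℝ E} (hN : IsMaximalNonnegSubspace A N) :
    ∃ M, N = b.graphSubspace M := by
  classical
  obtain ⟨g, hg⟩ := (b.posCoords.domRestrict N).exists_rightInverse_of_surjective (by
    rw [LinearMap.range_domRestrict, b.map_posCoords_eq_top_of_isMaximalNonnegSubspace heig hzero
      hpos hN])
  have hpos_g : ∀ c, b.posCoords (g c) = c := fun c => LinearMap.congr_fun hg c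
  set M := LinearMap.toMatrix' (b.negCoords ∘ₗ N.subtype ∘ₗ g)
  have hM : ∀ c, M *ᵥ c = b.negCoords (g c) := fun c => LinearMap.toMatrix'_mulVec _ c
  have hle : N ≤ b.graphSubspace M := fun v hv => by
    have hdiff : b.posCoords (v - g (b.posCoords v)) = 0 := by rw [map_sub, hpos_g, sub_self]
    have := b.negCoords_eq_zero_of_posCoords_eq_zero heig hzero hneg
      (hN.1 _ (N.sub_mem hv (g _).2)) hdiff
    rwa [map_sub, sub_eq_zero, ← hM, ← mem_graphSubspace] at this
  refine ⟨M, (hN.2 _ ((b.isNonnegSubspace_graphSubspace_iff heig hzero (fun r => (hneg r).le)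
    M).2 fun c => ?_) hle).symm⟩
  have := hN.1 _ (g c).2
  rwa [b.inner_apply_self_eq_sub heig hzero (fun r => (hneg r).le), sub_nonneg, hpos_g, ← hM]
    at this

theorem isMaximalNonnegSubspace_iff (heig : ∀ i, A (b i) = lam i • b i)
    (hzero : ∀ k, lam (.inl (.inl k)) = 0) (hneg : ∀ r, lam (.inl (.inr r)) < 0)
    (hpos : ∀ s, 0 < lam (.inr s)) (N : Submodule ℝ E) :
    IsMaximalNonnegSubspace A N ↔ ∃ M, N = b.graphSubspace M ∧
      ∀ c, ∑ r, |lam (.inl (.inr r))| * (M *ᵥ c) r ^ 2 ≤ ∑ s, lam (.inr s) * c s ^ 2 := by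
  have hgraph := b.isNonnegSubspace_graphSubspace_iff heig hzero fun r => (hneg r).le
  constructor
  · intro hN
    obtain ⟨M, rfl⟩ := b.exists_eq_graphSubspace_of_isMaximalNonnegSubspace heig hzero hneg hpos hN
    exact ⟨M, rfl, (hgraph M).1 hN.1⟩
  · rintro ⟨M, rfl, hM⟩
    exact b.isMaximalNonnegSubspace_graphSubspace heig hzero hneg ((hgraph M).2 hM)

end OrthonormalBasis

end Signature

/-- Algebraic characterization of maximal nonnegative subspaces for a
symmetric operator `A` on `ℝ^m` with orthonormal eigenbasis `e₁,…,e_m` whose eigenvalues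
are zero for the first `l₀` indices, negative for the next `l₋`, and positive for the
last `l₊ = m − l₀ − l₋`: a subspace `N` is maximal nonnegative for `A` iff there is an
`l₋ × l₊` matrix `M` with
`N = { v : ⟨e_{l₀+r}, v⟩ = Σ_s M_{rs} ⟨e_{l₀+l₋+s}, v⟩ }` and `‖D₋ M D₊⁻¹‖ ≤ 1`,
where `D₋ = diag(√|λ_{l₀+r}|)` and `D₊ = diag(√λ_{l₀+l₋+s})`. -/
theorem maximal_nonneg_subspace_characterization
    (m l₀ lneg lpos : ℕ) (hsum : l₀ + lneg + lpos = m)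
    (A : EuclideanSpace ℝ (Fin m) →ₗ[ℝ] EuclideanSpace ℝ (Fin m))
    (e : Fin m → EuclideanSpace ℝ (Fin m)) (lam : Fin m → ℝ)
    (he : Orthonormal ℝ e)
    (heig : ∀ i : Fin m, A (e i) = lam i • e i)
    (hzero : ∀ i : Fin m, (i : ℕ) < l₀ → lam i = 0)
    (hneg : ∀ i : Fin m, l₀ ≤ (i : ℕ) → (i : ℕ) < l₀ + lneg → lam i < 0)
    (hpos : ∀ i : Fin m, l₀ + lneg ≤ (i : ℕ) → 0 < lam i)
    (N : Submodule ℝ (EuclideanSpace ℝ (Fin m))) :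
    ((∀ x ∈ N, 0 ≤ ⟪x, A x⟫) ∧
      ∀ N' : Submodule ℝ (EuclideanSpace ℝ (Fin m)),
        (∀ x ∈ N', 0 ≤ ⟪x, A x⟫) → N ≤ N' → N' = N) ↔
    (∃ M : Matrix (Fin lneg) (Fin lpos) ℝ,
      (∀ v : EuclideanSpace ℝ (Fin m), v ∈ N ↔ ∀ r : Fin lneg,
        ⟪e ⟨l₀ + (r : ℕ), by omega⟩, v⟫ =
          ∑ s : Fin lpos, M r s * ⟪e ⟨l₀ + lneg + (s : ℕ), by omega⟩, v⟫) ∧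
      ‖LinearMap.toContinuousLinearMap (Matrix.toEuclideanLin
          (Matrix.of fun (r : Fin lneg) (s : Fin lpos) =>
            Real.sqrt |lam ⟨l₀ + (r : ℕ), by omega⟩| * M r s /
              Real.sqrt (lam ⟨l₀ + lneg + (s : ℕ), by omega⟩)))‖ ≤ 1) := by
  subst hsum
  let σ : (Fin l₀ ⊕ Fin lneg) ⊕ Fin lpos ≃ Fin (l₀ + lneg + lpos) :=
    (Equiv.sumCongr finSumFinEquiv (Equiv.refl _)).trans finSumFinEquiv
  have hspan : ⊤ ≤ Submodule.span ℝ (Set.range e) :=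
    (he.linearIndependent.span_eq_top_of_card_eq_finrank' (by simp)).ge
  let b := (OrthonormalBasis.mk he hspan).reindex σ.symm
  have hb : ∀ i, b i = e (σ i) := by simp [b]
  refine (b.isMaximalNonnegSubspace_iff (lam := lam ∘ σ) (fun i => by rw [hb]; exact heig _)
    (fun k => hzero _ k.2) (fun r => hneg _ (by simp [σ]) (by simp [σ]))
    (fun s => hpos _ (by simp [σ])) N).trans (exists_congr fun M => and_congr ?_ ?_)
  · rw [SetLike.ext_iff]
    refine forall_congr' fun v => iff_congr Iff.rfl ?_
    simp only [b.mem_graphSubspace, funext_iff, Matrix.mulVec, dotProduct,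
      OrthonormalBasis.negCoords_apply, OrthonormalBasis.posCoords_apply, hb]
    rfl
  · exact (Matrix.opNorm_toEuclideanLin_scaled_le_one_iff (fun r => abs_nonneg _)
      (fun s => hpos _ (by simp [σ])) M).symm
end

section
/- Let Ω ⊂ ℝ³ be a bounded open polyhedron. Let w_i, v_i, u_{ij}, f_i be smooth (up to the boundary) time-dependent fields on Ω̄ × [0,∞) satisfying the evolution system ẇ_i = v_i, v̇_i = ∂^j u_{ij} + f_i, u̇_{ij} = ∂_j v_i on Ω for all t ≥ 0; suppose the initial data satisfy ∂^i v_i(0) = 0 and ∂^i u_{ij}(0) = 0 on Ω, the forcing satisfies ∂^i f_i = 0 on Ω for all t ≥ 0, and on every open face of ∂Ω (with exterior unit normal n and tangential projection τ_i{}^j = δ_i{}^j − n_i n^j) the boundary conditions n^i n^j u_{ij} = 0 and τ^{ij} v_i = 0 hold for all t ≥ 0. Then the constraint C := ∂^i v_i vanishes identically on Ω for all t ≥ 0. -/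
open MeasureTheory Filter Set

/-- Partial derivative `∂_i f(x)` of a scalar field on `ℝ³`. -/
noncomputable def pd (i : Fin 3) (f : (Fin 3 → ℝ) → ℝ) (x : Fin 3 → ℝ) : ℝ :=
  fderiv ℝ f x (Pi.single i 1)

abbrev E3 := Fin 3 → ℝ
abbrev P4 := ℝ × E3

/-- spatial partial derivative of a spacetime field -/
noncomputable def pdq (j : Fin 3) (F : P4 → ℝ) (q : P4) : ℝ :=
  fderiv ℝ F q (0, Pi.single j 1)

/-- time derivative of a spacetime field -/
noncomputable def pdt (F : P4 → ℝ) (q : P4) : ℝ :=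
  fderiv ℝ F q (1, 0)

lemma contDiff_pdq {F : P4 → ℝ} (hF : ContDiff ℝ (⊤ : ℕ∞) F) (j : Fin 3) :
    ContDiff ℝ (⊤ : ℕ∞) (pdq j F) := by
  have h := (hF.fderiv_right (m := (⊤ : ℕ∞)) (by simp))
  exact h.clm_apply contDiff_const

lemma contDiff_pdt {F : P4 → ℝ} (hF : ContDiff ℝ (⊤ : ℕ∞) F) :
    ContDiff ℝ (⊤ : ℕ∞) (pdt F) := by
  have h := (hF.fderiv_right (m := (⊤ : ℕ∞)) (by simp))
  exact h.clm_apply contDiff_const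

lemma pd_eq_pdq {F : P4 → ℝ} (hF : ContDiff ℝ (⊤ : ℕ∞) F) (j : Fin 3) (t : ℝ) (x : E3) :
    pd j (fun y => F (t, y)) x = pdq j F (t, x) := by
  have h1 : HasFDerivAt (fun y : E3 => (t, y)) (ContinuousLinearMap.inr ℝ ℝ E3) x :=
    (hasFDerivAt_const t x).prodMk (hasFDerivAt_id x)
  have h2 : HasFDerivAt F (fderiv ℝ F (t, x)) (t, x) :=
    (hF.differentiable (by simp)).differentiableAt.hasFDerivAt
  have h3 : HasFDerivAt (fun y => F (t, y))
      ((fderiv ℝ F (t, x)).comp (ContinuousLinearMap.inr ℝ ℝ E3)) x := h2.comp x h1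
  rw [pd, h3.fderiv]
  rfl

lemma deriv_eq_pdt {F : P4 → ℝ} (hF : ContDiff ℝ (⊤ : ℕ∞) F) (t : ℝ) (x : E3) :
    deriv (fun s => F (s, x)) t = pdt F (t, x) := by
  have h1 : HasFDerivAt (fun s : ℝ => (s, x)) (ContinuousLinearMap.inl ℝ ℝ E3) t :=
    (hasFDerivAt_id t).prodMk (hasFDerivAt_const x t)
  have h2 : HasFDerivAt F (fderiv ℝ F (t, x)) (t, x) :=
    (hF.differentiable (by simp)).differentiableAt.hasFDerivAt
  have h3 : HasDerivAt (fun s => F (s, x))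
      (((fderiv ℝ F (t, x)).comp (ContinuousLinearMap.inl ℝ ℝ E3)) 1) t :=
    (h2.comp t h1).hasDerivAt
  rw [h3.deriv]
  rfl

/-- Clairaut / symmetry of second derivatives for smooth functions. -/
lemma clairaut {P : Type*} [NormedAddCommGroup P] [NormedSpace ℝ P]
    {F : P → ℝ} (hF : ContDiff ℝ (⊤ : ℕ∞) F) (a b : P) (q : P) :
    fderiv ℝ (fun p => fderiv ℝ F p a) q b = fderiv ℝ (fun p => fderiv ℝ F p b) q a := by
  have hd : ∀ y, HasFDerivAt F (fderiv ℝ F y) y := fun y =>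
    (hF.differentiable (by simp)).differentiableAt.hasFDerivAt
  have hf' : ContDiff ℝ (⊤ : ℕ∞) (fderiv ℝ F) := hF.fderiv_right (m := (⊤ : ℕ∞)) (by simp)
  have hf'' : HasFDerivAt (fderiv ℝ F) (fderiv ℝ (fderiv ℝ F) q) q :=
    (hf'.differentiable (by simp)).differentiableAt.hasFDerivAt
  have hsymm := second_derivative_symmetric hd hf'' a b
  have ha : ∀ c : P, fderiv ℝ (fun p => fderiv ℝ F p c) q
      = (fderiv ℝ (fderiv ℝ F) q).flip c := by
    intro c
    have : HasFDerivAt (fun p => fderiv ℝ F p c)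
        ((ContinuousLinearMap.apply ℝ ℝ c).comp (fderiv ℝ (fderiv ℝ F) q)) q :=
      (ContinuousLinearMap.apply ℝ ℝ c).hasFDerivAt.comp q hf''
    rw [this.fderiv]; rfl
  rw [ha a, ha b]
  simpa using (second_derivative_symmetric hd hf'' b a).symm ▸ hsymm.symm


section OneD

/-- left endpoint of the component of `x` in `U` -/
noncomputable def lep (U : Set ℝ) (x : ℝ) : ℝ := sSup (Uᶜ ∩ Iic x)
noncomputable def rep (U : Set ℝ) (x : ℝ) : ℝ := sInf (Uᶜ ∩ Ici x)

lemma compl_nonempty_below {U : Set ℝ} (hUb : Bornology.IsBounded U) (x : ℝ) :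
    (Uᶜ ∩ Iic x).Nonempty := by
  obtain ⟨R, hR⟩ := hUb.subset_ball 0
  refine ⟨-(|x| + |R| + 1), fun h => ?_, by simp [neg_le]; nlinarith [neg_abs_le x, abs_nonneg R, abs_nonneg x]⟩
  have := hR h
  simp only [Metric.mem_ball, Real.dist_eq, sub_zero] at this
  have h2 : |(-(|x| + |R| + 1))| = |x| + |R| + 1 := by
    rw [abs_neg, abs_of_nonneg]; positivity
  rw [h2] at this
  nlinarith [abs_nonneg x, le_abs_self R]

lemma compl_nonempty_above {U : Set ℝ} (hUb : Bornology.IsBounded U) (x : ℝ) :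
    (Uᶜ ∩ Ici x).Nonempty := by
  obtain ⟨R, hR⟩ := hUb.subset_ball 0
  refine ⟨|x| + |R| + 1, fun h => ?_, by simp; nlinarith [le_abs_self x, abs_nonneg R]⟩
  have := hR h
  simp only [Metric.mem_ball, Real.dist_eq, sub_zero] at this
  rw [abs_of_nonneg (by positivity)] at this
  nlinarith [abs_nonneg x, le_abs_self R]

lemma frontier_not_mem {U : Set ℝ} (hUo : IsOpen U) {x : ℝ} (h : x ∈ frontier U) : x ∉ U := by
  rw [frontier, hUo.interior_eq] at h
  exact h.2

lemma frontier_mem_of {U : Set ℝ} (hUo : IsOpen U) {x : ℝ} (h1 : x ∈ closure U) (h2 : x ∉ U) :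
    x ∈ frontier U := by
  rw [frontier, hUo.interior_eq]
  exact ⟨h1, h2⟩

lemma lep_spec {U : Set ℝ} (hUo : IsOpen U) (hUb : Bornology.IsBounded U) {x : ℝ} (hx : x ∈ U) :
    lep U x ∈ frontier U ∧ lep U x < x ∧ Ioo (lep U x) x ⊆ U := by
  have hne := compl_nonempty_below hUb x
  have hbdd : BddAbove (Uᶜ ∩ Iic x) := ⟨x, fun y hy => hy.2⟩
  have hcl : IsClosed (Uᶜ ∩ Iic x) := (hUo.isClosed_compl).inter isClosed_Iic
  have hmem : lep U x ∈ Uᶜ ∩ Iic x := hcl.csSup_mem hne hbdd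
  have hlt : lep U x < x := lt_of_le_of_ne hmem.2 (fun h => hmem.1 (by rw [h]; exact hx))
  have hIoo : Ioo (lep U x) x ⊆ U := by
    intro y hy
    by_contra hyU
    exact absurd (le_csSup hbdd ⟨hyU, hy.2.le⟩) (not_le.2 hy.1)
  refine ⟨frontier_mem_of hUo (closure_mono hIoo ?_) hmem.1, hlt, hIoo⟩
  rw [closure_Ioo hlt.ne]
  exact ⟨le_refl _, hlt.le⟩

lemma rep_spec {U : Set ℝ} (hUo : IsOpen U) (hUb : Bornology.IsBounded U) {x : ℝ} (hx : x ∈ U) :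
    rep U x ∈ frontier U ∧ x < rep U x ∧ Ioo x (rep U x) ⊆ U := by
  have hne := compl_nonempty_above hUb x
  have hbdd : BddBelow (Uᶜ ∩ Ici x) := ⟨x, fun y hy => hy.2⟩
  have hcl : IsClosed (Uᶜ ∩ Ici x) := (hUo.isClosed_compl).inter isClosed_Ici
  have hmem : rep U x ∈ Uᶜ ∩ Ici x := hcl.csInf_mem hne hbdd
  have hlt : x < rep U x := lt_of_le_of_ne hmem.2 (fun h => hmem.1 (by rw [← h]; exact hx))
  have hIoo : Ioo x (rep U x) ⊆ U := by
    intro y hy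
    by_contra hyU
    exact absurd (csInf_le hbdd ⟨hyU, hy.1.le⟩) (not_le.2 hy.2)
  refine ⟨frontier_mem_of hUo (closure_mono hIoo ?_) hmem.1, hlt, hIoo⟩
  rw [closure_Ioo hlt.ne]
  exact ⟨hlt.le, le_refl _⟩

/-- the component interval of `x` -/
lemma comp_sub {U : Set ℝ} (hUo : IsOpen U) (hUb : Bornology.IsBounded U) {x : ℝ} (hx : x ∈ U) :
    Ioo (lep U x) (rep U x) ⊆ U := by
  obtain ⟨_, hl, hIl⟩ := lep_spec hUo hUb hx
  obtain ⟨_, hr, hIr⟩ := rep_spec hUo hUb hx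
  intro y hy
  rcases lt_trichotomy y x with h | h | h
  · exact hIl ⟨hy.1, h⟩
  · exact h ▸ hx
  · exact hIr ⟨h, hy.2⟩

lemma comp_eq {U : Set ℝ} (hUo : IsOpen U) (hUb : Bornology.IsBounded U) {x z : ℝ} (hx : x ∈ U)
    (hz : z ∈ Ioo (lep U x) (rep U x)) : lep U z = lep U x ∧ rep U z = rep U x := by
  have hzU : z ∈ U := comp_sub hUo hUb hx hz
  obtain ⟨hfl, hlx, _⟩ := lep_spec hUo hUb hx
  obtain ⟨hfr, hrx, _⟩ := rep_spec hUo hUb hx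
  constructor
  · have h1 : lep U x ≤ lep U z :=
      le_csSup ⟨z, fun y hy => hy.2⟩ ⟨frontier_not_mem hUo hfl, hz.1.le⟩
    refine le_antisymm ?_ h1
    by_contra h
    push_neg at h
    have : lep U z ∈ U := by
      refine comp_sub hUo hUb hx ⟨h, ?_⟩
      obtain ⟨hm, hlz, _⟩ := lep_spec hUo hUb hzU
      exact hlz.trans hz.2
    exact frontier_not_mem hUo (lep_spec hUo hUb hzU).1 this
  · have h1 : rep U z ≤ rep U x :=
      csInf_le ⟨z, fun y hy => hy.2⟩ ⟨frontier_not_mem hUo hfr, hz.2.le⟩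
    refine le_antisymm h1 ?_
    by_contra h
    push_neg at h
    have : rep U z ∈ U := by
      refine comp_sub hUo hUb hx ⟨?_, h⟩
      obtain ⟨hm, hrz, _⟩ := rep_spec hUo hUb hzU
      exact hz.1.trans hrz
    exact frontier_not_mem hUo (rep_spec hUo hUb hzU).1 this

end OneD

section OneD2
lemma comp_eq_or_disjoint {U : Set ℝ} (hUo : IsOpen U) (hUb : Bornology.IsBounded U)
    {x y : ℝ} (hx : x ∈ U) (hy : y ∈ U) :
    Ioo (lep U x) (rep U x) = Ioo (lep U y) (rep U y) ∨
      Disjoint (Ioo (lep U x) (rep U x)) (Ioo (lep U y) (rep U y)) := by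
  by_cases hd : Disjoint (Ioo (lep U x) (rep U x)) (Ioo (lep U y) (rep U y))
  · exact Or.inr hd
  · left
    obtain ⟨z, hz1, hz2⟩ := Set.not_disjoint_iff.mp hd
    obtain ⟨e1, e2⟩ := comp_eq hUo hUb hx hz1
    obtain ⟨f1, f2⟩ := comp_eq hUo hUb hy hz2
    rw [← e1, ← e2, f1, f2]

lemma oneD_div {U : Set ℝ} (hUo : IsOpen U) (hUb : Bornology.IsBounded U) {g : ℝ → ℝ}
    (hg : ContDiff ℝ (⊤ : ℕ∞) g) (h0 : ∀ x ∈ frontier U, g x = 0) :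
    ∫ x in U, deriv g x = 0 := by
  classical
  set e : ℕ → ℚ := fun n => (Denumerable.eqv ℚ).symm n with he
  have hesurj : Function.Surjective e := (Denumerable.eqv ℚ).symm.surjective
  set I : ℝ → Set ℝ := fun x => Ioo (lep U x) (rep U x) with hI
  set J : ℕ → Set ℝ := fun n =>
    if ((e n : ℝ) ∈ U ∧ ∀ m < n, ¬(((e m : ℝ) ∈ U) ∧ I (e m) = I (e n))) then I (e n)
    else ∅ with hJ
  have hJsub : ∀ n, J n ⊆ U := by
    intro n
    rw [hJ]; dsimp only
    split_ifs with h
    · exact comp_sub hUo hUb h.1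
    · exact empty_subset _
  have hmeas : ∀ n, MeasurableSet (J n) := by
    intro n
    rw [hJ]; dsimp only
    split_ifs
    · exact measurableSet_Ioo
    · exact MeasurableSet.empty
  have hunion : U = ⋃ n, J n := by
    apply Subset.antisymm
    · intro x hx
      obtain ⟨hlf, hlx, hlsub⟩ := lep_spec hUo hUb hx
      obtain ⟨hrf, hrx, hrsub⟩ := rep_spec hUo hUb hx
      have hxI : x ∈ I x := ⟨hlx, hrx⟩
      obtain ⟨q, hq1, hq2⟩ := exists_rat_btwn hlx
      have hqI : (q : ℝ) ∈ I x := ⟨hq1, hq2.trans hrx⟩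
      have hqU : (q : ℝ) ∈ U := comp_sub hUo hUb hx hqI
      have hqe : I (q : ℝ) = I x := by
        obtain ⟨a, b⟩ := comp_eq hUo hUb hx hqI
        rw [hI]; dsimp only; rw [a, b]
      have hS : ∃ n, ((e n : ℝ) ∈ U ∧ I (e n) = I x) := by
        obtain ⟨n, hn⟩ := hesurj q
        exact ⟨n, by rw [hn]; exact hqU, by rw [hn]; exact hqe⟩
      set n₀ := Nat.find hS with hn₀
      obtain ⟨hn₀U, hn₀I⟩ := Nat.find_spec hS
      have hcond : ((e n₀ : ℝ) ∈ U ∧ ∀ m < n₀, ¬(((e m : ℝ) ∈ U) ∧ I (e m) = I (e n₀))) := by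
        refine ⟨hn₀U, fun m hm hc => ?_⟩
        exact Nat.find_min hS hm ⟨hc.1, hc.2.trans hn₀I⟩
      refine mem_iUnion.mpr ⟨n₀, ?_⟩
      rw [hJ]; dsimp only
      rw [if_pos hcond, hn₀I]
      exact hxI
    · exact iUnion_subset hJsub
  have hdisj : Pairwise (Function.onFun Disjoint J) := by
    have key : ∀ m n, m < n → Disjoint (J m) (J n) := by
      intro m n hmn
      rw [hJ]; dsimp only
      split_ifs with h1 h2
      · have := h2.2 m hmn
        push_neg at this
        have hne := this h1.1
        rcases comp_eq_or_disjoint hUo hUb h1.1 h2.1 with heq | hd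
        · exact absurd heq hne
        · exact hd
      all_goals simp
    intro m n hmn
    rcases lt_or_gt_of_ne hmn with h | h
    · exact key m n h
    · exact (key n m h).symm
  have hgcont : Continuous (deriv g) := hg.continuous_deriv (by simp)
  have hint : IntegrableOn (deriv g) U := by
    have hK : IsCompact (closure U) :=
      Metric.isCompact_of_isClosed_isBounded isClosed_closure hUb.closure
    exact (ContinuousOn.integrableOn_compact hK hgcont.continuousOn).mono_set subset_closure
  have hJzero : ∀ n, ∫ x in J n, deriv g x = 0 := by
    intro n
    rw [hJ]; dsimp only
    split_ifs with h
    · have heU : (e n : ℝ) ∈ U := h.1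
      obtain ⟨hlf, hlx, _⟩ := lep_spec hUo hUb heU
      obtain ⟨hrf, hrx, _⟩ := rep_spec hUo hUb heU
      have hle : lep U (e n) ≤ rep U (e n) := (hlx.trans hrx).le
      rw [hI]; dsimp only
      rw [← integral_Ioc_eq_integral_Ioo, ← intervalIntegral.integral_of_le hle]
      rw [intervalIntegral.integral_deriv_eq_sub
        (fun x _ => (hg.differentiable (by simp)).differentiableAt)
        (hgcont.intervalIntegrable _ _)]
      rw [h0 _ hrf, h0 _ hlf, sub_zero]
    · simp
  calc ∫ x in U, deriv g x = ∫ x in ⋃ n, J n, deriv g x := by rw [← hunion]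
    _ = ∑' n, ∫ x in J n, deriv g x := integral_iUnion hmeas hdisj (hunion ▸ hint)
    _ = 0 := by simp [hJzero]

lemma contDiff_pd {g : E3 → ℝ} (hg : ContDiff ℝ (⊤ : ℕ∞) g) (i : Fin 3) :
    ContDiff ℝ (⊤ : ℕ∞) (pd i g) :=
  (hg.fderiv_right (m := (⊤ : ℕ∞)) (by simp)).clm_apply contDiff_const

lemma cont_integrableOn {X : Type*} [NormedAddCommGroup X] [MeasureSpace X]
    [OpensMeasurableSpace X] [ProperSpace X]
    [IsFiniteMeasureOnCompacts (volume : Measure X)]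
    {s : Set X} (hs : Bornology.IsBounded s) {f : X → ℝ} (hf : Continuous f) :
    IntegrableOn f s := by
  exact (ContinuousOn.integrableOn_compact
    (Metric.isCompact_of_isClosed_isBounded isClosed_closure hs.closure)
    hf.continuousOn).mono_set subset_closure

lemma insertNth_affine (i : Fin 3) (z : Fin 2 → ℝ) :
    (fun s : ℝ => (Fin.insertNth i s z : E3)) = fun s : ℝ =>
      s • (Pi.single i (1:ℝ) : E3) + (Fin.insertNth i (0:ℝ) z : E3) := by
  funext s j
  rcases eq_or_ne j i with rfl | hj
  · simp [Fin.insertNth_apply_same]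
  · obtain ⟨k, rfl⟩ := Fin.exists_succAbove_eq hj
    simp [Fin.insertNth_apply_succAbove, Pi.single_eq_of_ne (Fin.succAbove_ne i k)]

lemma hasDerivAt_insertNth (i : Fin 3) (z : Fin 2 → ℝ) (s : ℝ) :
    HasDerivAt (fun s : ℝ => (Fin.insertNth i s z : E3)) (Pi.single i (1:ℝ) : E3) s := by
  rw [insertNth_affine]
  simpa using ((hasDerivAt_id s).smul_const ((Pi.single i (1:ℝ)) : E3)).add_const
    ((Fin.insertNth i (0:ℝ) z : E3))

lemma contDiff_insertNth (i : Fin 3) (z : Fin 2 → ℝ) :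
    ContDiff ℝ (⊤ : ℕ∞) (fun s : ℝ => (Fin.insertNth i s z : E3)) := by
  rw [insertNth_affine]
  exact ((contDiff_id.smul contDiff_const)).add contDiff_const

lemma pd_integral_zero (Ω : Set E3) (hΩo : IsOpen Ω) (hΩb : Bornology.IsBounded Ω)
    {g : E3 → ℝ} (hg : ContDiff ℝ (⊤ : ℕ∞) g) (h0 : ∀ x ∈ frontier Ω, g x = 0) (i : Fin 3) :
    ∫ x in Ω, pd i g x = 0 := by
  classical
  set e := MeasurableEquiv.piFinSuccAbove (fun _ : Fin 3 => ℝ) i with he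
  have hesymm : ∀ p : ℝ × (Fin 2 → ℝ), e.symm p = Fin.insertNth i p.1 p.2 := by
    intro p
    rw [MeasurableEquiv.piFinSuccAbove_symm_apply]
    rfl
  have hmp : MeasurePreserving e.symm volume volume :=
    (volume_preserving_piFinSuccAbove (fun _ : Fin 3 => ℝ) i).symm e
  have hecont : Continuous (⇑e.symm) := by
    have : ⇑e.symm = fun p : ℝ × (Fin 2 → ℝ) => (Fin.insertNth i p.1 p.2 : E3) := by
      funext p; exact hesymm p
    rw [this]
    exact Continuous.finInsertNth (A := fun _ : Fin 3 => ℝ) i continuous_fst continuous_snd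
  obtain ⟨R, hR⟩ := isBounded_iff_forall_norm_le.mp hΩb
  set V : Set (ℝ × (Fin 2 → ℝ)) := ⇑e.symm ⁻¹' Ω with hV
  have hVmeas : MeasurableSet V := e.symm.measurable hΩo.measurableSet
  have hVopen : IsOpen V := hΩo.preimage hecont
  have hVb : Bornology.IsBounded V := by
    rw [isBounded_iff_forall_norm_le]
    refine ⟨max R 0, fun p hp => ?_⟩
    have h1 : ‖e.symm p‖ ≤ R := hR _ hp
    rw [Prod.norm_def, hesymm] at *
    have h2 : ‖p.1‖ ≤ R := by
      have := norm_le_pi_norm (Fin.insertNth i p.1 p.2 : E3) i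
      rw [Fin.insertNth_apply_same] at this
      exact this.trans h1
    have h3 : ‖p.2‖ ≤ max R 0 := by
      refine (pi_norm_le_iff_of_nonneg (le_max_right R 0)).mpr fun k => ?_
      have := norm_le_pi_norm (Fin.insertNth i p.1 p.2 : E3) (i.succAbove k)
      rw [Fin.insertNth_apply_succAbove] at this
      exact this.trans (h1.trans (le_max_left R 0))
    exact max_le (h2.trans (le_max_left R 0)) h3
  set H : ℝ × (Fin 2 → ℝ) → ℝ := fun p => pd i g (e.symm p) with hH
  have hHcont : Continuous H := ((contDiff_pd hg i).continuous).comp hecont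
  have hHint : Integrable (V.indicator H) := by
    rw [integrable_indicator_iff hVmeas]
    exact cont_integrableOn hVb hHcont
  have step1 : ∫ x in Ω, pd i g x = ∫ p in V, H p :=
    (hmp.setIntegral_preimage_emb e.symm.measurableEmbedding _ Ω).symm
  rw [step1, ← integral_indicator hVmeas]
  rw [Measure.volume_eq_prod] at hHint ⊢
  rw [integral_prod_symm _ hHint]
  have hinner : ∀ z : Fin 2 → ℝ, (∫ x1 : ℝ, V.indicator H (x1, z)) = 0 := by
    intro z
    set A : ℝ → E3 := fun s => Fin.insertNth i s z with hA
    set Uz : Set ℝ := {s : ℝ | A s ∈ Ω} with hUz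
    have hAcont : Continuous A := by
      rw [hA, insertNth_affine]
      exact ((continuous_id.smul continuous_const)).add continuous_const
    have hUzo : IsOpen Uz := hΩo.preimage hAcont
    have hUzb : Bornology.IsBounded Uz := by
      rw [isBounded_iff_forall_norm_le]
      refine ⟨R, fun s hs => ?_⟩
      have h1 : ‖A s‖ ≤ R := hR _ hs
      have h2 : |s| ≤ ‖A s‖ := by
        have := norm_le_pi_norm (A s) i
        simpa [hA, Fin.insertNth_apply_same] using this
      simpa using h2.trans h1
    have hφ : ContDiff ℝ (⊤ : ℕ∞) (fun s => g (A s)) := hg.comp (contDiff_insertNth i z)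
    have hderiv : ∀ s : ℝ, deriv (fun s => g (A s)) s = pd i g (A s) := by
      intro s
      have h1 : HasDerivAt (fun s => g (A s)) (fderiv ℝ g (A s) (Pi.single i (1:ℝ))) s :=
        ((hg.differentiable (by simp)).differentiableAt.hasFDerivAt).comp_hasDerivAt s
          (hasDerivAt_insertNth i z s)
      exact h1.deriv
    have hfr : ∀ s ∈ frontier Uz, g (A s) = 0 := by
      intro s hs
      refine h0 _ ⟨?_, ?_⟩
      · have h1 : s ∈ closure Uz := hs.1
        have h2 : A s ∈ closure (A '' Uz) := by
          have := image_closure_subset_closure_image hAcont (s := Uz)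
          exact this ⟨s, h1, rfl⟩
        refine closure_mono ?_ h2
        rintro y ⟨sy, hsy, rfl⟩
        exact hsy
      · intro hmem
        rw [hΩo.interior_eq] at hmem
        refine hs.2 ?_
        rw [hUzo.interior_eq]
        exact hmem
    have heq : (fun x1 => V.indicator H (x1, z)) = Uz.indicator (deriv (fun s => g (A s))) := by
      funext x1
      by_cases hx : A x1 ∈ Ω
      · have hv : (x1, z) ∈ V := by
          rw [hV, mem_preimage, hesymm]
          exact hx
        rw [indicator_of_mem hv, indicator_of_mem (show x1 ∈ Uz from hx), hderiv, hH]
        dsimp only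
        rw [hesymm]
      · have hv : (x1, z) ∉ V := by
          rw [hV, mem_preimage, hesymm]
          exact hx
        rw [indicator_of_notMem hv, indicator_of_notMem (show x1 ∉ Uz from hx)]
    rw [heq, integral_indicator hUzo.measurableSet]
    exact oneD_div hUzo hUzb hφ hfr
  simp [hinner]

lemma vec_expand (w : E3) : ∑ j, w j • (Pi.single j (1:ℝ) : E3) = w := by
  funext k
  rw [Finset.sum_apply]
  simp [Pi.single_apply]

lemma sum_mul_single (n : E3) (k : Fin 3) : ∑ i, n i * (Pi.single k (1:ℝ) : E3) i = n k := by
  simp [Pi.single_apply]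

lemma sum_mul_single' (n : E3) (l : Fin 3) : ∑ k, n k * (Pi.single k (1:ℝ) : E3) l = n l := by
  simp [Pi.single_apply]

section Boundary

theorem boundary_C_zero (Ω : Set E3) (hΩopen : IsOpen Ω)
    {ι : Type} [Fintype ι] (face : ι → Set E3) (nrm : ι → E3)
    (hface_sub : ∀ a, face a ⊆ frontier Ω)
    (hcover : frontier Ω ⊆ ⋃ a, closure (face a))
    (hunit : ∀ a, ∑ i, nrm a i * nrm a i = 1)
    (hrelopen : ∀ a, ∀ x ∈ face a, ∃ ε > 0, ∀ y,
      dist y x < ε → (∑ i, nrm a i * (y i - x i)) = 0 → y ∈ face a)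
    (v : ℝ → E3 → Fin 3 → ℝ) (u : ℝ → E3 → Fin 3 → Fin 3 → ℝ)
    (hvsmooth : ∀ i, ContDiff ℝ (⊤ : ℕ∞) (fun q : P4 => v q.1 q.2 i))
    (husmooth : ∀ i j, ContDiff ℝ (⊤ : ℕ∞) (fun q : P4 => u q.1 q.2 i j))
    (hevu : ∀ t : ℝ, 0 ≤ t → ∀ x ∈ Ω, ∀ i j,
      deriv (fun s => u s x i j) t = pd j (fun y => v t y i) x)
    (hbc1 : ∀ t : ℝ, 0 ≤ t → ∀ a, ∀ x ∈ face a,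
      ∑ i, ∑ j, nrm a i * nrm a j * u t x i j = 0)
    (hbc2 : ∀ t : ℝ, 0 ≤ t → ∀ a, ∀ x ∈ face a, ∀ j,
      v t x j - nrm a j * (∑ i, nrm a i * v t x i) = 0)
    {t : ℝ} (ht : 0 < t) {x : E3} (hx : x ∈ frontier Ω) :
    ∑ i, pd i (fun y => v t y i) x = 0 := by
  classical
  -- Step (a): evolution equation for u extends to the closure of Ω
  have hevu' : ∀ i j, ∀ y ∈ closure Ω, pdt (fun q : P4 => u q.1 q.2 i j) (t, y)
      = pdq j (fun q : P4 => v q.1 q.2 i) (t, y) := by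
    intro i j
    have heqon : EqOn (fun y => pdt (fun q : P4 => u q.1 q.2 i j) (t, y))
        (fun y => pdq j (fun q : P4 => v q.1 q.2 i) (t, y)) Ω := by
      intro y hy
      have h1 := hevu t ht.le y hy i j
      show pdt (fun q : P4 => u q.1 q.2 i j) (t, y) = pdq j (fun q : P4 => v q.1 q.2 i) (t, y)
      rw [← deriv_eq_pdt (husmooth i j) t y, ← pd_eq_pdq (hvsmooth i) j t y]
      exact h1
    have hc1 : Continuous (fun y => pdt (fun q : P4 => u q.1 q.2 i j) (t, y)) :=
      (contDiff_pdt (husmooth i j)).continuous.comp (Continuous.prodMk_right t)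
    have hc2 : Continuous (fun y => pdq j (fun q : P4 => v q.1 q.2 i) (t, y)) :=
      (contDiff_pdq (hvsmooth i) j).continuous.comp (Continuous.prodMk_right t)
    exact fun y hy => heqon.closure hc1 hc2 hy
  -- Step (e): reduce to a single face via the covering of the frontier
  obtain ⟨sa, ⟨a, rfl⟩, hxa⟩ := hcover hx
  -- suffices: C vanishes on the face itself
  have hface_zero : ∀ z ∈ face a, ∑ i, pd i (fun y => v t y i) z = 0 := by
    intro z hz
    set n : E3 := nrm a with hn
    have hzcl : z ∈ closure Ω := (hface_sub a hz).1
    -- differentiability of the spatial slices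
    have hdiffv : ∀ k, DifferentiableAt ℝ (fun y => v t y k) z := fun k =>
      (((hvsmooth k).comp (contDiff_const.prodMk contDiff_id)).differentiable (by simp)).differentiableAt
    set L : Fin 3 → (E3 →L[ℝ] ℝ) := fun k => fderiv ℝ (fun y => v t y k) z with hLdef
    have hMd : DifferentiableAt ℝ (fun y => ∑ i, n i * v t y i) z := by
      apply DifferentiableAt.fun_sum
      intro i _
      exact (hdiffv i).const_mul (n i)
    set M : E3 →L[ℝ] ℝ := fderiv ℝ (fun y => ∑ i, n i * v t y i) z with hMdef
    -- (b): the normal-normal derivative identity from the time derivative of bc1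
    have hb : ∑ i, ∑ j, n i * n j * (L i) (Pi.single j 1) = 0 := by
      have hdiffu : ∀ i j : Fin 3, DifferentiableAt ℝ (fun s => u s z i j) t := by
        intro i j
        exact (((husmooth i j).comp ((contDiff_id).prodMk contDiff_const)).differentiable
          (by simp)).differentiableAt
      have hsum : HasDerivAt (fun s => ∑ i, ∑ j, n i * n j * u s z i j)
          (∑ i, ∑ j, n i * n j * deriv (fun s => u s z i j) t) t := by
        refine HasDerivAt.fun_sum fun i _ => HasDerivAt.fun_sum fun j _ => ?_
        exact ((hdiffu i j).hasDerivAt).const_mul (n i * n j)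
      have hev0 : deriv (fun s => ∑ i, ∑ j, n i * n j * u s z i j) t = 0 := by
        have hez : (fun s => ∑ i, ∑ j, n i * n j * u s z i j) =ᶠ[nhds t]
            (fun _ => (0:ℝ)) := by
          filter_upwards [Ioi_mem_nhds ht] with s hs
          exact hbc1 s (le_of_lt hs) a z hz
        rw [hez.deriv_eq]
        exact deriv_const t 0
      have h2 : ∑ i, ∑ j, n i * n j * deriv (fun s => u s z i j) t = 0 := by
        rw [← hsum.deriv]; exact hev0
      rw [← h2]
      refine Finset.sum_congr rfl fun i _ => Finset.sum_congr rfl fun j _ => ?_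
      congr 1
      have e1 : deriv (fun s => u s z i j) t = pdt (fun q : P4 => u q.1 q.2 i j) (t, z) :=
        deriv_eq_pdt (husmooth i j) t z
      rw [e1, hevu' i j z hzcl]
      exact pd_eq_pdq (hvsmooth i) j t z
    -- (c): tangential derivatives from bc2
    have htang : ∀ (τ : E3), (∑ i, n i * τ i) = 0 → ∀ k, (L k) τ = n k * (M τ) := by
      intro τ hτ k
      set h : E3 → ℝ := fun y => v t y k - n k * ∑ i, n i * v t y i with hhdef
      have hh : HasFDerivAt h (L k - n k • M) z :=
        ((hdiffv k).hasFDerivAt).sub (((hMd).hasFDerivAt).const_mul (n k))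
      obtain ⟨ε, hε, hfa⟩ := hrelopen a z hz
      have hzero : (fun s : ℝ => h (z + s • τ)) =ᶠ[nhds (0:ℝ)] (fun _ => (0:ℝ)) := by
        have hδ : (0:ℝ) < ε / (‖τ‖ + 1) := by positivity
        filter_upwards [Metric.ball_mem_nhds 0 hδ] with s hs
        have hsb : |s| < ε / (‖τ‖ + 1) := by simpa [Real.dist_eq] using hs
        have h1 : dist (z + s • τ) z < ε := by
          have hdist : dist (z + s • τ) z = |s| * ‖τ‖ := by
            rw [dist_eq_norm, add_sub_cancel_left, norm_smul, Real.norm_eq_abs]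
          rw [hdist]
          calc |s| * ‖τ‖ ≤ |s| * (‖τ‖ + 1) := by
                nlinarith [abs_nonneg s, norm_nonneg τ]
            _ < ε := (lt_div_iff₀ (by positivity)).mp hsb
        have h2 : ∑ i, n i * ((z + s • τ) i - z i) = 0 := by
          have hco : ∀ i, n i * ((z + s • τ) i - z i) = s * (n i * τ i) := by
            intro i
            have : (z + s • τ) i - z i = s * τ i := by
              simp [Pi.add_apply, Pi.smul_apply, smul_eq_mul]
            rw [this]; ring
          rw [Finset.sum_congr rfl fun i _ => hco i, ← Finset.mul_sum, hτ, mul_zero]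
        exact hbc2 t ht.le a _ (hfa _ h1 h2) k
      have hline : HasDerivAt (fun s : ℝ => z + s • τ) τ 0 := by
        simpa using ((hasDerivAt_id (0:ℝ)).smul_const τ).const_add z
      have hh' : HasFDerivAt h (L k - n k • M) (z + (0:ℝ) • τ) := by
        simpa using hh
      have hc : HasDerivAt (fun s : ℝ => h (z + s • τ)) ((L k - n k • M) τ) 0 :=
        by have := hh'.comp_hasDerivAt 0 hline; exact this
      have hzero' : (L k - n k • M) τ = 0 := by
        rw [← hc.deriv, hzero.deriv_eq]
        exact deriv_const _ _
      have : (L k) τ - n k * (M τ) = 0 := by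
        simpa [ContinuousLinearMap.sub_apply, ContinuousLinearMap.smul_apply,
          smul_eq_mul] using hzero'
      linarith
    -- (b) restated: normal component of L applied to the normal vanishes
    have hbL : ∑ i, n i * ((L i) n) = 0 := by
      rw [← hb]
      refine Finset.sum_congr rfl fun i _ => ?_
      have : (L i) n = ∑ j, n j * (L i) (Pi.single j 1) := by
        conv_lhs => rw [← vec_expand n]
        rw [map_sum]
        exact Finset.sum_congr rfl fun j _ => by rw [_root_.map_smul, smul_eq_mul]
      rw [this, Finset.mul_sum]
      exact Finset.sum_congr rfl fun j _ => by ring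
    -- assemble
    set τv : Fin 3 → E3 := fun k => Pi.single k 1 - n k • n with hτvdef
    have htau0 : ∀ k, ∑ i, n i * τv k i = 0 := by
      intro k
      have h1 : ∑ i, n i * τv k i
          = (∑ i, n i * (Pi.single k (1:ℝ) : E3) i) - n k * ∑ i, n i * n i := by
        rw [Finset.mul_sum, ← Finset.sum_sub_distrib]
        refine Finset.sum_congr rfl fun i _ => ?_
        simp only [hτvdef, Pi.sub_apply, Pi.smul_apply, smul_eq_mul]
        ring
      rw [h1, sum_mul_single, hunit a, mul_one, sub_self]
    have hτsum : ∑ k, n k • τv k = 0 := by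
      funext l
      rw [Finset.sum_apply]
      have : ∀ k, (n k • τv k) l = n k * (Pi.single k (1:ℝ) : E3) l - n k * n k * n l := by
        intro k
        simp only [hτvdef, Pi.smul_apply, Pi.sub_apply, smul_eq_mul]
        ring
      rw [Finset.sum_congr rfl fun k _ => this k, Finset.sum_sub_distrib, sum_mul_single']
      have : ∑ k, n k * n k * n l = (∑ k, n k * n k) * n l := by
        rw [Finset.sum_mul]
      rw [this, hunit a, one_mul, sub_self]
      rfl
    have hfinal : ∑ k, (L k) (Pi.single k 1) = 0 := by
      have hsplit : ∀ k, (L k) (Pi.single k 1) = (L k) (τv k) + n k * ((L k) n) := by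
        intro k
        have : (Pi.single k (1:ℝ) : E3) = τv k + n k • n := by
          simp [hτvdef]
        rw [this, map_add, _root_.map_smul, smul_eq_mul]
      rw [Finset.sum_congr rfl fun k _ => hsplit k, Finset.sum_add_distrib, hbL, add_zero]
      have : ∀ k, (L k) (τv k) = n k * (M (τv k)) := fun k => htang (τv k) (htau0 k) k
      rw [Finset.sum_congr rfl fun k _ => this k]
      have : ∑ k, n k * (M (τv k)) = M (∑ k, n k • τv k) := by
        rw [map_sum]
        exact (Finset.sum_congr rfl fun k _ => by rw [_root_.map_smul, smul_eq_mul]).symm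
      rw [this, hτsum, map_zero]
    rw [← hfinal]
    exact Finset.sum_congr rfl fun k _ => rfl
  -- transfer to the closure of the face by continuity
  have hCcont : Continuous (fun y => ∑ i, pd i (fun y' => v t y' i) y) := by
    have : (fun y => ∑ i, pd i (fun y' => v t y' i) y) =
        (fun y => ∑ i, pdq i (fun q : P4 => v q.1 q.2 i) (t, y)) := by
      funext y
      exact Finset.sum_congr rfl fun i _ => pd_eq_pdq (hvsmooth i) i t y
    rw [this]
    exact continuous_finset_sum _ fun i _ =>
      (contDiff_pdq (hvsmooth i) i).continuous.comp (Continuous.prodMk_right t)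
  have := (Set.EqOn.closure (fun z hz => hface_zero z hz) hCcont continuous_const) hxa
  simpa using this

end Boundary


lemma pdt_pdq_comm {F : P4 → ℝ} (hF : ContDiff ℝ (⊤ : ℕ∞) F) (j : Fin 3) (q : P4) :
    pdt (pdq j F) q = pdq j (pdt F) q :=
  clairaut hF (0, Pi.single j 1) (1, 0) q

lemma pdq_pdq_comm {F : P4 → ℝ} (hF : ContDiff ℝ (⊤ : ℕ∞) F) (i j : Fin 3) (q : P4) :
    pdq i (pdq j F) q = pdq j (pdq i F) q :=
  clairaut hF (0, Pi.single j 1) (0, Pi.single i 1) q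

lemma pd_congr_nhds {f g : E3 → ℝ} {x : E3} (h : f =ᶠ[nhds x] g) (i : Fin 3) :
    pd i f x = pd i g x := by
  rw [pd, pd, h.fderiv_eq]

lemma pd_sum {G : Fin 3 → E3 → ℝ} {x : E3} (hG : ∀ j, DifferentiableAt ℝ (G j) x) (i : Fin 3) :
    pd i (fun y => ∑ j, G j y) x = ∑ j, pd i (G j) x := by
  rw [pd, fderiv_fun_sum (fun j _ => hG j)]
  simp [pd]

lemma pd_add {A B : E3 → ℝ} {x : E3} (hA : DifferentiableAt ℝ A x)
    (hB : DifferentiableAt ℝ B x) (i : Fin 3) :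
    pd i (fun y => A y + B y) x = pd i A x + pd i B x := by
  rw [pd, fderiv_fun_add hA hB]
  simp [pd]

lemma pdq_sum {G : Fin 3 → P4 → ℝ} (hG : ∀ j, ContDiff ℝ (⊤ : ℕ∞) (G j)) (i : Fin 3) (q : P4) :
    pdq i (fun p => ∑ j, G j p) q = ∑ j, pdq i (G j) q := by
  rw [pdq, fderiv_fun_sum (fun j _ => ((hG j).differentiable (by simp)).differentiableAt)]
  simp [pdq]

lemma pdt_sum {G : Fin 3 → P4 → ℝ} (hG : ∀ j, ContDiff ℝ (⊤ : ℕ∞) (G j)) (q : P4) :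
    pdt (fun p => ∑ j, G j p) q = ∑ j, pdt (G j) q := by
  rw [pdt, fderiv_fun_sum (fun j _ => ((hG j).differentiable (by simp)).differentiableAt)]
  simp [pdt]

noncomputable def CCq (v : ℝ → E3 → Fin 3 → ℝ) : P4 → ℝ :=
  fun q => ∑ i, pdq i (fun p => v p.1 p.2 i) q

noncomputable def DDq (u : ℝ → E3 → Fin 3 → Fin 3 → ℝ) (j : Fin 3) : P4 → ℝ :=
  fun q => ∑ i, pdq i (fun p => u p.1 p.2 i j) q

noncomputable def rho (v : ℝ → E3 → Fin 3 → ℝ) (u : ℝ → E3 → Fin 3 → Fin 3 → ℝ) : P4 → ℝ :=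
  fun q => (CCq v q)^2 + ∑ j, (DDq u j q)^2

section Fields
variable {v : ℝ → E3 → Fin 3 → ℝ} {u : ℝ → E3 → Fin 3 → Fin 3 → ℝ}
lemma contDiff_CCq (hvsmooth : ∀ i, ContDiff ℝ (⊤ : ℕ∞) (fun q : P4 => v q.1 q.2 i)) :
    ContDiff ℝ (⊤ : ℕ∞) (CCq v) :=
  ContDiff.sum fun i _ => contDiff_pdq (hvsmooth i) i

lemma contDiff_DDq (husmooth : ∀ i j, ContDiff ℝ (⊤ : ℕ∞) (fun q : P4 => u q.1 q.2 i j)) (j : Fin 3) :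
    ContDiff ℝ (⊤ : ℕ∞) (DDq u j) :=
  ContDiff.sum fun i _ => contDiff_pdq (husmooth i j) i

lemma contDiff_rho (hvsmooth : ∀ i, ContDiff ℝ (⊤ : ℕ∞) (fun q : P4 => v q.1 q.2 i))
    (husmooth : ∀ i j, ContDiff ℝ (⊤ : ℕ∞) (fun q : P4 => u q.1 q.2 i j)) :
    ContDiff ℝ (⊤ : ℕ∞) (rho v u) := by
  refine ContDiff.add ?_ (ContDiff.sum fun j _ => ?_)
  · exact (contDiff_CCq hvsmooth).pow 2
  · exact (contDiff_DDq husmooth j).pow 2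

/-- interior identity 1 : `∂_t C = div D` -/
lemma interior_C (Ω : Set E3) (hΩopen : IsOpen Ω)
    (hvsmooth : ∀ i, ContDiff ℝ (⊤ : ℕ∞) (fun q : P4 => v q.1 q.2 i))
    (husmooth : ∀ i j, ContDiff ℝ (⊤ : ℕ∞) (fun q : P4 => u q.1 q.2 i j))
    {f : ℝ → E3 → Fin 3 → ℝ}
    (hfsmooth : ∀ i, ContDiff ℝ (⊤ : ℕ∞) (fun q : P4 => f q.1 q.2 i))
    (hevv : ∀ t : ℝ, 0 ≤ t → ∀ x ∈ Ω, ∀ i,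
      deriv (fun s => v s x i) t = (∑ j, pd j (fun y => u t y i j) x) + f t x i)
    (hfdiv : ∀ t : ℝ, 0 ≤ t → ∀ x ∈ Ω, ∑ i, pd i (fun y => f t y i) x = 0)
    {t : ℝ} (ht : 0 ≤ t) {x : E3} (hx : x ∈ Ω) :
    pdt (CCq v) (t, x) = ∑ j, pdq j (DDq u j) (t, x) := by
  have hsliceu : ∀ i j : Fin 3, DifferentiableAt ℝ
      (fun y => pdq j (fun q : P4 => u q.1 q.2 i j) (t, y)) x := by
    intro i j
    exact (((contDiff_pdq (husmooth i j) j).comp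
      (contDiff_const.prodMk contDiff_id)).differentiable (by simp)).differentiableAt
  have step1 : pdt (CCq v) (t, x)
      = ∑ i, pdq i (pdt (fun q : P4 => v q.1 q.2 i)) (t, x) := by
    show pdt (fun p => ∑ i, pdq i (fun p' : P4 => v p'.1 p'.2 i) p) (t,x) = _
    rw [pdt_sum (fun i => contDiff_pdq (hvsmooth i) i)]
    exact Finset.sum_congr rfl fun i _ => pdt_pdq_comm (hvsmooth i) i (t, x)
  have step2 : ∀ i, pdq i (pdt (fun q : P4 => v q.1 q.2 i)) (t, x)
      = (∑ j, pdq i (pdq j (fun q : P4 => u q.1 q.2 i j)) (t, x))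
        + pdq i (fun q : P4 => f q.1 q.2 i) (t, x) := by
    intro i
    rw [← pd_eq_pdq (contDiff_pdt (hvsmooth i)) i t x]
    have hev : (fun y => pdt (fun q : P4 => v q.1 q.2 i) (t, y)) =ᶠ[nhds x]
        (fun y => (∑ j, pdq j (fun q : P4 => u q.1 q.2 i j) (t, y)) + f t y i) := by
      filter_upwards [hΩopen.mem_nhds hx] with y hy
      rw [← deriv_eq_pdt (hvsmooth i) t y]
      rw [show (deriv (fun s => (fun q : P4 => v q.1 q.2 i) (s, y)) t)
        = deriv (fun s => v s y i) t from rfl, hevv t ht y hy i]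
      refine congrArg (· + f t y i) ?_
      exact Finset.sum_congr rfl fun j _ => pd_eq_pdq (husmooth i j) j t y
    rw [pd_congr_nhds hev i]
    have hd1 : DifferentiableAt ℝ
        (fun y => ∑ j, pdq j (fun q : P4 => u q.1 q.2 i j) (t, y)) x := by
      apply DifferentiableAt.fun_sum
      intro j _
      exact hsliceu i j
    have hd2 : DifferentiableAt ℝ (fun y => f t y i) x :=
      (((hfsmooth i).comp (contDiff_const.prodMk contDiff_id)).differentiable
        (by simp)).differentiableAt
    rw [pd_add hd1 hd2 i]
    congr 1
    · rw [pd_sum (fun j => hsliceu i j) i]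
      exact Finset.sum_congr rfl fun j _ =>
        pd_eq_pdq (contDiff_pdq (husmooth i j) j) i t x
    · exact pd_eq_pdq (hfsmooth i) i t x
  rw [step1, Finset.sum_congr rfl fun i _ => step2 i, Finset.sum_add_distrib]
  have hlast : ∑ i, pdq i (fun q : P4 => f q.1 q.2 i) (t, x) = 0 := by
    rw [← Finset.sum_congr rfl fun i (_ : i ∈ Finset.univ) => pd_eq_pdq (hfsmooth i) i t x]
    exact hfdiv t ht x hx
  rw [hlast, add_zero, Finset.sum_comm]
  refine Finset.sum_congr rfl fun j _ => ?_
  have : ∀ i, pdq i (pdq j (fun q : P4 => u q.1 q.2 i j)) (t, x)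
      = pdq j (pdq i (fun q : P4 => u q.1 q.2 i j)) (t, x) :=
    fun i => pdq_pdq_comm (husmooth i j) i j (t, x)
  rw [Finset.sum_congr rfl fun i _ => this i]
  exact (pdq_sum (fun i => contDiff_pdq (husmooth i j) i) j (t, x)).symm

/-- interior identity 2 : `∂_t D_j = ∂_j C` -/
lemma interior_D (Ω : Set E3) (hΩopen : IsOpen Ω)
    (hvsmooth : ∀ i, ContDiff ℝ (⊤ : ℕ∞) (fun q : P4 => v q.1 q.2 i))
    (husmooth : ∀ i j, ContDiff ℝ (⊤ : ℕ∞) (fun q : P4 => u q.1 q.2 i j))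
    (hevu : ∀ t : ℝ, 0 ≤ t → ∀ x ∈ Ω, ∀ i j,
      deriv (fun s => u s x i j) t = pd j (fun y => v t y i) x)
    {t : ℝ} (ht : 0 ≤ t) {x : E3} (hx : x ∈ Ω) (j : Fin 3) :
    pdt (DDq u j) (t, x) = pdq j (CCq v) (t, x) := by
  have step1 : pdt (DDq u j) (t, x)
      = ∑ i, pdq i (pdt (fun q : P4 => u q.1 q.2 i j)) (t, x) := by
    show pdt (fun p => ∑ i, pdq i (fun p' : P4 => u p'.1 p'.2 i j) p) (t,x) = _
    rw [pdt_sum (fun i => contDiff_pdq (husmooth i j) i)]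
    exact Finset.sum_congr rfl fun i _ => pdt_pdq_comm (husmooth i j) i (t, x)
  rw [step1]
  have step2 : ∀ i, pdq i (pdt (fun q : P4 => u q.1 q.2 i j)) (t, x)
      = pdq i (pdq j (fun q : P4 => v q.1 q.2 i)) (t, x) := by
    intro i
    rw [← pd_eq_pdq (contDiff_pdt (husmooth i j)) i t x,
      ← pd_eq_pdq (contDiff_pdq (hvsmooth i) j) i t x]
    apply pd_congr_nhds
    filter_upwards [hΩopen.mem_nhds hx] with y hy
    rw [← deriv_eq_pdt (husmooth i j) t y]
    rw [show (deriv (fun s => (fun q : P4 => u q.1 q.2 i j) (s, y)) t)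
      = deriv (fun s => u s y i j) t from rfl, hevu t ht y hy i j]
    exact pd_eq_pdq (hvsmooth i) j t y
  rw [Finset.sum_congr rfl fun i _ => step2 i]
  rw [Finset.sum_congr rfl fun i (_ : i ∈ Finset.univ) =>
    pdq_pdq_comm (hvsmooth i) i j (t, x)]
  exact (pdq_sum (fun i => contDiff_pdq (hvsmooth i) i) j (t, x)).symm

/-- time derivative of the energy density -/
lemma pdt_rho (hvsmooth : ∀ i, ContDiff ℝ (⊤ : ℕ∞) (fun q : P4 => v q.1 q.2 i))
    (husmooth : ∀ i j, ContDiff ℝ (⊤ : ℕ∞) (fun q : P4 => u q.1 q.2 i j)) (q : P4) :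
    pdt (rho v u) q = 2 * CCq v q * pdt (CCq v) q
      + ∑ j, 2 * DDq u j q * pdt (DDq u j) q := by
  have hCf : HasFDerivAt (CCq v) (fderiv ℝ (CCq v) q) q :=
    (((contDiff_CCq hvsmooth).differentiable (by simp)) q).hasFDerivAt
  have hDf : ∀ j, HasFDerivAt (DDq u j) (fderiv ℝ (DDq u j) q) q := fun j =>
    (((contDiff_DDq husmooth j).differentiable (by simp)) q).hasFDerivAt
  have hsqC : (fun p => CCq v p ^ 2) = fun p => CCq v p * CCq v p := by
    funext p; ring
  have hsqD : ∀ j, (fun p => DDq u j p ^ 2) = fun p => DDq u j p * DDq u j p := by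
    intro j; funext p; ring
  have h1 : HasFDerivAt (fun p => CCq v p ^ 2)
      (CCq v q • fderiv ℝ (CCq v) q + CCq v q • fderiv ℝ (CCq v) q) q := by
    rw [hsqC]; exact hCf.mul hCf
  have h2 : HasFDerivAt (fun p => ∑ j, DDq u j p ^ 2)
      (∑ j, (DDq u j q • fderiv ℝ (DDq u j) q + DDq u j q • fderiv ℝ (DDq u j) q)) q := by
    refine HasFDerivAt.fun_sum fun j _ => ?_
    rw [hsqD j]; exact (hDf j).mul (hDf j)
  have htot : HasFDerivAt (rho v u)
      ((CCq v q • fderiv ℝ (CCq v) q + CCq v q • fderiv ℝ (CCq v) q)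
        + ∑ j, (DDq u j q • fderiv ℝ (DDq u j) q + DDq u j q • fderiv ℝ (DDq u j) q)) q :=
    h1.add h2
  rw [pdt, htot.fderiv]
  simp only [ContinuousLinearMap.add_apply, ContinuousLinearMap.coe_sum',
    Finset.sum_apply, ContinuousLinearMap.coe_smul', Pi.smul_apply, smul_eq_mul, pdt]
  congr 1
  · ring
  · exact Finset.sum_congr rfl fun j _ => by ring
end Fields


lemma hasDerivAt_slice {F : P4 → ℝ} (hF : ContDiff ℝ (⊤ : ℕ∞) F) (t : ℝ) (x : E3) :
    HasDerivAt (fun s => F (s, x)) (pdt F (t, x)) t := by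
  have h1 : HasFDerivAt (fun s : ℝ => (s, x)) (ContinuousLinearMap.inl ℝ ℝ E3) t :=
    (hasFDerivAt_id t).prodMk (hasFDerivAt_const x t)
  have h2 : HasFDerivAt F (fderiv ℝ F (t, x)) (t, x) :=
    (hF.differentiable (by simp)).differentiableAt.hasFDerivAt
  have h3 : HasDerivAt (fun s => F (s, x))
      (((fderiv ℝ F (t, x)).comp (ContinuousLinearMap.inl ℝ ℝ E3)) 1) t :=
    (h2.comp t h1).hasDerivAt
  simpa [pdt] using h3

lemma energy_hasDerivAt {Ω : Set E3} (hΩo : IsOpen Ω) (hΩb : Bornology.IsBounded Ω)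
    {ρ : P4 → ℝ} (hρ : ContDiff ℝ (⊤ : ℕ∞) ρ) (t₀ : ℝ) :
    HasDerivAt (fun t => ∫ x in Ω, ρ (t, x)) (∫ x in Ω, pdt ρ (t₀, x)) t₀ := by
  haveI : IsFiniteMeasure (volume.restrict Ω) := by
    constructor
    rw [Measure.restrict_apply_univ]
    exact hΩb.measure_lt_top
  have hK : IsCompact ((Icc (t₀ - 1) (t₀ + 1)) ×ˢ closure Ω) :=
    isCompact_Icc.prod (Metric.isCompact_of_isClosed_isBounded isClosed_closure hΩb.closure)
  have hpdt : Continuous (pdt ρ) := (contDiff_pdt hρ).continuous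
  obtain ⟨M, hM⟩ := hK.exists_bound_of_continuousOn hpdt.continuousOn
  have key := hasDerivAt_integral_of_dominated_loc_of_deriv_le
    (μ := volume.restrict Ω) (F := fun t x => ρ (t, x)) (F' := fun t x => pdt ρ (t, x))
    (x₀ := t₀) (bound := fun _ => M) (s := Metric.ball t₀ 1) (Metric.ball_mem_nhds t₀ one_pos)
    ?_ ?_ ?_ ?_ ?_ ?_
  · exact key.2
  · filter_upwards with t
    exact ((hρ.continuous).comp (Continuous.prodMk_right t)).aestronglyMeasurable
  · exact cont_integrableOn hΩb ((hρ.continuous).comp (Continuous.prodMk_right t₀))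
  · exact (hpdt.comp (Continuous.prodMk_right t₀)).aestronglyMeasurable
  · filter_upwards [ae_restrict_mem hΩo.measurableSet] with x hx
    intro t htb
    refine hM (t, x) ⟨?_, subset_closure hx⟩
    have : |t - t₀| < 1 := by simpa [Real.dist_eq] using htb
    rw [mem_Icc]
    constructor <;> [linarith [abs_lt.mp this |>.1]; linarith [abs_lt.mp this |>.2]]
  · exact integrable_const M
  · filter_upwards with x
    intro t _
    exact hasDerivAt_slice hρ t x

/-- On a bounded open polyhedron `Ω ⊂ ℝ³` (boundary a finite union of
planar faces, with constant exterior unit normal `n` on each open face), a smooth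
solution of the model system `ẇ_i = v_i`, `v̇_i = ∂^j u_{ij} + f_i`, `u̇_{ij} = ∂_j v_i`
with divergence-free initial data (`∂^i v_i(0) = 0`, `∂^i u_{ij}(0) = 0`),
divergence-free forcing (`∂^i f_i = 0`), and boundary conditions
`n^i n^j u_{ij} = 0`, `τ^{ij} v_i = 0` on every face, satisfies the constraint
`C = ∂^i v_i = 0` on `Ω` for all `t ≥ 0`. -/
theorem model_problem_constraint_preserved
    (Ω : Set (Fin 3 → ℝ)) (hΩopen : IsOpen Ω) (hΩbdd : Bornology.IsBounded Ω)
    -- the faces of the polyhedron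
    (ι : Type) [Fintype ι] (face : ι → Set (Fin 3 → ℝ)) (nrm : ι → Fin 3 → ℝ)
    (hface_sub : ∀ a, face a ⊆ frontier Ω)
    (hcover : frontier Ω ⊆ ⋃ a, closure (face a))
    (hunit : ∀ a, ∑ i, nrm a i * nrm a i = 1)
    (hplanar : ∀ a, ∀ x ∈ face a, ∀ y ∈ face a, ∑ i, nrm a i * (x i - y i) = 0)
    (hrelopen : ∀ a, ∀ x ∈ face a, ∃ ε > 0, ∀ y,
      dist y x < ε → (∑ i, nrm a i * (y i - x i)) = 0 → y ∈ face a)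
    (hexterior : ∀ a, ∀ x ∈ face a, ∃ ε > 0, ∀ s : ℝ, 0 < s → s < ε →
      x + s • nrm a ∉ closure Ω ∧ x - s • nrm a ∈ Ω)
    -- the fields
    (w v f : ℝ → (Fin 3 → ℝ) → Fin 3 → ℝ)
    (u : ℝ → (Fin 3 → ℝ) → Fin 3 → Fin 3 → ℝ)
    (hwsmooth : ∀ i, ContDiff ℝ (⊤ : ℕ∞) (fun q : ℝ × (Fin 3 → ℝ) => w q.1 q.2 i))
    (hvsmooth : ∀ i, ContDiff ℝ (⊤ : ℕ∞) (fun q : ℝ × (Fin 3 → ℝ) => v q.1 q.2 i))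
    (hfsmooth : ∀ i, ContDiff ℝ (⊤ : ℕ∞) (fun q : ℝ × (Fin 3 → ℝ) => f q.1 q.2 i))
    (husmooth : ∀ i j, ContDiff ℝ (⊤ : ℕ∞) (fun q : ℝ × (Fin 3 → ℝ) => u q.1 q.2 i j))
    -- the evolution equations on Ω
    (hevw : ∀ t : ℝ, 0 ≤ t → ∀ x ∈ Ω, ∀ i, deriv (fun s => w s x i) t = v t x i)
    (hevv : ∀ t : ℝ, 0 ≤ t → ∀ x ∈ Ω, ∀ i,
      deriv (fun s => v s x i) t = (∑ j, pd j (fun y => u t y i j) x) + f t x i)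
    (hevu : ∀ t : ℝ, 0 ≤ t → ∀ x ∈ Ω, ∀ i j,
      deriv (fun s => u s x i j) t = pd j (fun y => v t y i) x)
    -- compatibility of the initial data and forcing with the constraint
    (hv0 : ∀ x ∈ Ω, ∑ i, pd i (fun y => v 0 y i) x = 0)
    (hu0 : ∀ x ∈ Ω, ∀ j, ∑ i, pd i (fun y => u 0 y i j) x = 0)
    (hfdiv : ∀ t : ℝ, 0 ≤ t → ∀ x ∈ Ω, ∑ i, pd i (fun y => f t y i) x = 0)
    -- the boundary conditions on every face
    (hbc1 : ∀ t : ℝ, 0 ≤ t → ∀ a, ∀ x ∈ face a,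
      ∑ i, ∑ j, nrm a i * nrm a j * u t x i j = 0)
    (hbc2 : ∀ t : ℝ, 0 ≤ t → ∀ a, ∀ x ∈ face a, ∀ j,
      v t x j - nrm a j * (∑ i, nrm a i * v t x i) = 0) :
    ∀ t : ℝ, 0 ≤ t → ∀ x ∈ Ω, ∑ i, pd i (fun y => v t y i) x = 0 := by
  intro t ht x hx
  have hCCpd : ∀ (s : ℝ) (y : E3), CCq v (s, y) = ∑ i, pd i (fun y' => v s y' i) y := by
    intro s y
    exact (Finset.sum_congr rfl fun i _ => pd_eq_pdq (hvsmooth i) i s y).symm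
  have hDDpd : ∀ (s : ℝ) (y : E3) (j : Fin 3),
      DDq u j (s, y) = ∑ i, pd i (fun y' => u s y' i j) y := by
    intro s y j
    exact (Finset.sum_congr rfl fun i _ => pd_eq_pdq (husmooth i j) i s y).symm
  rcases eq_or_lt_of_le ht with rfl | htpos
  · exact hv0 x hx
  -- setup
  have hΩmeas : MeasurableSet Ω := hΩopen.measurableSet
  set En : ℝ → ℝ := fun s => ∫ y in Ω, rho v u (s, y) with hEn
  have hρ : ContDiff ℝ (⊤ : ℕ∞) (rho v u) := contDiff_rho hvsmooth husmooth
  have hE : ∀ s, HasDerivAt En (∫ y in Ω, pdt (rho v u) (s, y)) s := fun s =>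
    energy_hasDerivAt hΩopen hΩbdd hρ s
  -- E(0) = 0
  have hE0 : En 0 = 0 := by
    show (∫ y in Ω, rho v u (0, y)) = 0
    have : EqOn (fun y => rho v u (0, y)) (fun _ => (0:ℝ)) Ω := by
      intro y hy
      have h1 : CCq v (0, y) = 0 := by rw [hCCpd]; exact hv0 y hy
      have h2 : ∀ j, DDq u j (0, y) = 0 := fun j => by rw [hDDpd]; exact hu0 y hy j
      simp [rho, h1, h2]
    rw [setIntegral_congr_fun hΩmeas this]
    simp
  -- E' = 0 for positive times
  have hEd0 : ∀ s : ℝ, 0 < s → (∫ y in Ω, pdt (rho v u) (s, y)) = 0 := by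
    intro s hs
    set g : Fin 3 → E3 → ℝ := fun j y => 2 * CCq v (s, y) * DDq u j (s, y) with hg
    have hCs : ContDiff ℝ (⊤ : ℕ∞) (fun y => CCq v (s, y)) :=
      (contDiff_CCq hvsmooth).comp (contDiff_const.prodMk contDiff_id)
    have hDs : ∀ j, ContDiff ℝ (⊤ : ℕ∞) (fun y => DDq u j (s, y)) := fun j =>
      (contDiff_DDq husmooth j).comp (contDiff_const.prodMk contDiff_id)
    have hgsmooth : ∀ j, ContDiff ℝ (⊤ : ℕ∞) (g j) := by
      intro j
      exact ((contDiff_const.mul hCs)).mul (hDs j)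
    have hgz : ∀ j, ∀ y ∈ frontier Ω, g j y = 0 := by
      intro j y hy
      have : CCq v (s, y) = 0 := by
        rw [hCCpd]
        exact boundary_C_zero Ω hΩopen face nrm hface_sub hcover hunit hrelopen v u
          hvsmooth husmooth hevu hbc1 hbc2 hs hy
      rw [hg]
      simp [this]
    have hpt : EqOn (fun y => pdt (rho v u) (s, y)) (fun y => ∑ j, pd j (g j) y) Ω := by
      intro y hy
      have hiC := interior_C Ω hΩopen hvsmooth husmooth hfsmooth hevv hfdiv hs.le hy
      have hiD := fun j => interior_D Ω hΩopen hvsmooth husmooth hevu hs.le hy j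
      have hprod : ∀ j, pd j (g j) y
          = 2 * CCq v (s, y) * pdq j (DDq u j) (s, y)
            + 2 * DDq u j (s, y) * pdq j (CCq v) (s, y) := by
        intro j
        have hCd : HasFDerivAt (fun y' => CCq v (s, y'))
            (fderiv ℝ (fun y' => CCq v (s, y')) y) y :=
          ((hCs.differentiable (by simp)) y).hasFDerivAt
        have hDd : HasFDerivAt (fun y' => DDq u j (s, y'))
            (fderiv ℝ (fun y' => DDq u j (s, y')) y) y :=
          (((hDs j).differentiable (by simp)) y).hasFDerivAt
        have hmul : HasFDerivAt (g j)
            ((2 * CCq v (s, y)) • fderiv ℝ (fun y' => DDq u j (s, y')) y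
              + DDq u j (s, y) • ((2:ℝ) • fderiv ℝ (fun y' => CCq v (s, y')) y)) y := by
          have := (hCd.const_mul (2:ℝ)).mul hDd
          simpa [hg, mul_comm, Pi.mul_def] using this
        rw [pd, hmul.fderiv]
        have e1 : fderiv ℝ (fun y' => CCq v (s, y')) y (Pi.single j 1)
            = pdq j (CCq v) (s, y) := by
          rw [show fderiv ℝ (fun y' => CCq v (s, y')) y (Pi.single j 1)
            = pd j (fun y' => CCq v (s, y')) y from rfl]
          exact pd_eq_pdq (contDiff_CCq hvsmooth) j s y
        have e2 : fderiv ℝ (fun y' => DDq u j (s, y')) y (Pi.single j 1)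
            = pdq j (DDq u j) (s, y) := by
          rw [show fderiv ℝ (fun y' => DDq u j (s, y')) y (Pi.single j 1)
            = pd j (fun y' => DDq u j (s, y')) y from rfl]
          exact pd_eq_pdq (contDiff_DDq husmooth j) j s y
        simp only [ContinuousLinearMap.add_apply, ContinuousLinearMap.coe_smul',
          Pi.smul_apply, smul_eq_mul, e1, e2]
        ring
      show pdt (rho v u) (s, y) = ∑ j, pd j (g j) y
      rw [pdt_rho hvsmooth husmooth, hiC, Finset.sum_congr rfl fun j _ => hprod j]
      rw [Finset.mul_sum, ← Finset.sum_add_distrib]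
      refine Finset.sum_congr rfl fun j _ => ?_
      rw [hiD j]
    rw [setIntegral_congr_fun hΩmeas hpt]
    have hintj : ∀ j, IntegrableOn (fun y => pd j (g j) y) Ω := fun j =>
      cont_integrableOn hΩbdd (contDiff_pd (hgsmooth j) j).continuous
    rw [integral_finset_sum _ (fun j _ => hintj j)]
    refine Finset.sum_eq_zero fun j _ => ?_
    exact pd_integral_zero Ω hΩopen hΩbdd (hgsmooth j) (fun y hy => hgz j y hy) j
  -- E is identically zero for t ≥ 0
  have hEcont : Continuous En := by
    refine continuous_iff_continuousAt.mpr fun s => ?_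
    exact (hE s).differentiableAt.continuousAt
  have hEt : En t = 0 := by
    have key : ∀ ε : ℝ, 0 < ε → ε ≤ t → En t = En ε := by
      intro ε hε hεt
      have := constant_of_has_deriv_right_zero (f := En) (a := ε) (b := t)
        hEcont.continuousOn ?_ t ⟨hεt, le_refl t⟩
      · exact this
      · intro r hr
        have h1 : (0:ℝ) < r := lt_of_lt_of_le hε hr.1
        have h2 := hE r
        rw [hEd0 r h1] at h2
        exact h2.hasDerivWithinAt
    have hlim : Tendsto En (nhdsWithin 0 (Ioi 0)) (nhds (En 0)) :=
      (hEcont.tendsto 0).mono_left nhdsWithin_le_nhds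
    have hconst : ∀ᶠ ε in nhdsWithin (0:ℝ) (Ioi 0), En ε = En t := by
      filter_upwards [Ioc_mem_nhdsGT_of_mem ⟨le_refl (0:ℝ), htpos⟩] with ε hε
      exact (key ε hε.1 hε.2).symm
    have h2 : Tendsto (fun _ : ℝ => En t) (nhdsWithin (0:ℝ) (Ioi 0)) (nhds (En 0)) :=
      hlim.congr' (by filter_upwards [hconst] with ε h using h)
    have h3 : En t = En 0 := tendsto_nhds_unique tendsto_const_nhds h2
    rw [h3, hE0]
  -- positivity argument
  have hCC : CCq v (t, x) = 0 := by
    by_contra hne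
    have hρcont : Continuous (fun y => rho v u (t, y)) :=
      hρ.continuous.comp (Continuous.prodMk_right t)
    have hposx : 0 < rho v u (t, x) := by
      have h1 : 0 < (CCq v (t, x))^2 := by positivity
      have h2 : 0 ≤ ∑ j, (DDq u j (t, x))^2 := Finset.sum_nonneg fun j _ => sq_nonneg _
      have : rho v u (t, x) = (CCq v (t, x))^2 + ∑ j, (DDq u j (t, x))^2 := rfl
      rw [this]
      linarith
    have hnbhd : {y | rho v u (t, x) / 2 < rho v u (t, y)} ∩ Ω ∈ nhds x := by
      refine inter_mem ?_ (hΩopen.mem_nhds hx)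
      exact hρcont.continuousAt.preimage_mem_nhds (Ioi_mem_nhds (by linarith))
    obtain ⟨r, hr, hball⟩ := Metric.mem_nhds_iff.mp hnbhd
    have hnonneg : ∀ y, 0 ≤ rho v u (t, y) := by
      intro y
      have : rho v u (t, y) = (CCq v (t, y))^2 + ∑ j, (DDq u j (t, y))^2 := rfl
      rw [this]
      positivity
    have hint : IntegrableOn (fun y => rho v u (t, y)) Ω := cont_integrableOn hΩbdd hρcont
    have hae : (fun y => rho v u (t, y)) =ᵐ[volume.restrict Ω] 0 :=
      (integral_eq_zero_iff_of_nonneg (fun y => hnonneg y) hint).mp hEt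
    have hnull : (volume.restrict Ω) {y | rho v u (t, y) ≠ 0} = 0 := by
      have := ae_iff.mp hae
      simpa using this
    have hsub : Metric.ball x r ⊆ {y | rho v u (t, y) ≠ 0} := by
      intro y hy
      have h1 := (hball hy).1
      have : 0 < rho v u (t, y) := lt_trans (by linarith) h1
      exact ne_of_gt this
    have h1 : (volume.restrict Ω) (Metric.ball x r) = 0 :=
      measure_mono_null hsub hnull
    have h2 : (volume.restrict Ω) (Metric.ball x r) = volume (Metric.ball x r) := by
      rw [Measure.restrict_apply' hΩmeas]
      congr 1
      exact inter_eq_left.mpr (fun y hy => (hball hy).2)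
    rw [h2] at h1
    exact absurd h1 (ne_of_gt (Metric.measure_ball_pos volume x hr))
  rw [← hCCpd, hCC]
end OneD2
end

section
/- Let Ω ⊂ ℝ³ be a bounded open polyhedron and suppose α ≡ 0 and β_i ≡ 0. Let (κ_{ij}, λ_{kij}) be a smooth (up to the boundary) solution on Ω̄ × [0,∞) of the homogeneous linearized Alekseenko–Arnold system (1/√2)κ̇_{ij} = ∂^k λ_{k(ij)}, (1/√2)λ̇_{kij} = ∂_{[k}κ_{i]j}, and suppose that on some open face F of ∂Ω, with exterior unit normal n and tangential projection τ_i{}^j = δ_i{}^j − n_i n^j, the boundary conditions n^i τ^{jk} κ_{ij} = 0 and n^k τ^{il} τ^{jm} λ_{kij} = 0 hold for all t ≥ 0. Then, with C_j := ∂^l κ_{lj} − ∂_j κ_l{}^l, the identity Ċ_j n^l ∂_l C^j + n^j Ċ_j ∂_l C^l = 0 holds at every point of F for all t ≥ 0. -/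
/-- The momentum constraint `C_j = ∂^l κ_{lj} − ∂_j κ_l{}^l`. -/
noncomputable def momC (κ : (Fin 3 → ℝ) → Fin 3 → Fin 3 → ℝ) (x : Fin 3 → ℝ) (j : Fin 3) : ℝ :=
  (∑ l, pd l (fun y => κ y l j) x) - pd j (fun y => ∑ l, κ y l l) x


open Set

noncomputable section AAproof

abbrev PT := ℝ × (Fin 3 → ℝ)

noncomputable def Dv (w : PT) (f : PT → ℝ) : PT → ℝ := fun p => fderiv ℝ f p w

lemma Dv_contDiff {f : PT → ℝ} (hf : ContDiff ℝ (⊤ : ℕ∞) f) (w : PT) : ContDiff ℝ (⊤ : ℕ∞) (Dv w f) :=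
  (hf.fderiv_right (by simp)).clm_apply contDiff_const

lemma Dv_continuous {f : PT → ℝ} (hf : ContDiff ℝ (⊤ : ℕ∞) f) (w : PT) : Continuous (Dv w f) :=
  (Dv_contDiff hf w).continuous

lemma dd {f : PT → ℝ} (hf : ContDiff ℝ (⊤ : ℕ∞) f) (p : PT) : DifferentiableAt ℝ f p :=
  (hf.differentiable (by simp)).differentiableAt

lemma Dv_add {f g : PT → ℝ} (hf : ContDiff ℝ (⊤ : ℕ∞) f) (hg : ContDiff ℝ (⊤ : ℕ∞) g) (w p) :
    Dv w (fun q => f q + g q) p = Dv w f p + Dv w g p := by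
  unfold Dv
  rw [fderiv_fun_add (dd hf p) (dd hg p)]; rfl

lemma Dv_sub {f g : PT → ℝ} (hf : ContDiff ℝ (⊤ : ℕ∞) f) (hg : ContDiff ℝ (⊤ : ℕ∞) g) (w p) :
    Dv w (fun q => f q - g q) p = Dv w f p - Dv w g p := by
  unfold Dv
  rw [fderiv_fun_sub (dd hf p) (dd hg p)]; rfl

lemma Dv_cmul {f : PT → ℝ} (hf : ContDiff ℝ (⊤ : ℕ∞) f) (c : ℝ) (w p) :
    Dv w (fun q => c * f q) p = c * Dv w f p := by
  unfold Dv
  rw [fderiv_const_mul (dd hf p) c]; rfl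

lemma Dv_div_const {f : PT → ℝ} (hf : ContDiff ℝ (⊤ : ℕ∞) f) (c : ℝ) (w p) :
    Dv w (fun q => f q / c) p = Dv w f p / c := by
  simp only [div_eq_mul_inv, mul_comm _ c⁻¹]
  exact Dv_cmul hf c⁻¹ w p

lemma Dv_sumf {ι : Type} [Fintype ι] (F : ι → PT → ℝ) (hF : ∀ i, ContDiff ℝ (⊤ : ℕ∞) (F i)) (w p) :
    Dv w (fun q => ∑ i, F i q) p = ∑ i, Dv w (F i) p := by
  unfold Dv
  rw [fderiv_fun_sum (fun i _ => dd (hF i) p)]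
  simp

lemma Dv_lin {ι : Type} [Fintype ι] (c : ι → ℝ) (F : ι → PT → ℝ)
    (hF : ∀ i, ContDiff ℝ (⊤ : ℕ∞) (F i)) (w p) :
    Dv w (fun q => ∑ i, c i * F i q) p = ∑ i, c i * Dv w (F i) p := by
  rw [Dv_sumf (fun i => fun q => c i * F i q) (fun i => contDiff_const.mul (hF i)) w p]
  exact Finset.sum_congr rfl fun i _ => Dv_cmul (hF i) (c i) w p

lemma Dv_decomp (f : PT → ℝ) (v : Fin 3 → ℝ) (p : PT) :
    Dv (0, v) f p = ∑ q, v q * Dv ((0:ℝ), Pi.single q (1:ℝ)) f p := by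
  unfold Dv
  have hv : ((0:ℝ), v) = ∑ q : Fin 3, v q • (((0:ℝ), Pi.single q (1:ℝ)) : PT) := by
    ext
    · simp [Prod.fst_sum]
    · simp [Prod.snd_sum, Finset.sum_apply, Pi.single_apply]
  rw [hv, map_sum]
  exact Finset.sum_congr rfl fun q _ => by rw [map_smul]; rfl

lemma Dv_comm {f : PT → ℝ} (hf : ContDiff ℝ (⊤ : ℕ∞) f) (w w' : PT) (p : PT) :
    Dv w (Dv w' f) p = Dv w' (Dv w f) p := by
  have hdf : Differentiable ℝ (fderiv ℝ f) :=
    (hf.fderiv_right (m := (⊤ : ℕ∞)) (by simp)).differentiable (by simp)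
  have key : ∀ a b : PT, Dv a (Dv b f) p = (fderiv ℝ (fderiv ℝ f) p) a b := by
    intro a b
    unfold Dv
    rw [fderiv_clm_apply (hdf p) (differentiableAt_const b)]
    simp
  rw [key, key]
  exact second_derivative_symmetric (fun y => (dd hf y).hasFDerivAt)
    (hdf p).hasFDerivAt w w'

lemma pd_slice (f : PT → ℝ) (hf : ContDiff ℝ (⊤ : ℕ∞) f) (t : ℝ) (x : Fin 3 → ℝ) (i : Fin 3) :
    fderiv ℝ (fun y => f (t, y)) x (Pi.single i 1) = Dv ((0:ℝ), Pi.single i (1:ℝ)) f (t, x) := by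
  have hg : HasFDerivAt (fun y : Fin 3 → ℝ => (t, y)) (ContinuousLinearMap.inr ℝ ℝ (Fin 3 → ℝ)) x := by
    have : (fun y : Fin 3 → ℝ => ((t:ℝ), y)) = fun y => ((t, 0) : PT) + (ContinuousLinearMap.inr ℝ ℝ (Fin 3 → ℝ)) y := by
      funext y; simp
    rw [this]
    exact ((ContinuousLinearMap.inr ℝ ℝ (Fin 3 → ℝ)).hasFDerivAt).const_add _
  have := ((dd hf (t,x)).hasFDerivAt.comp x hg).fderiv
  rw [show (fun y => f (t, y)) = f ∘ (fun y : Fin 3 → ℝ => (t, y)) from rfl, this]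
  rfl

lemma deriv_slice (f : PT → ℝ) (hf : ContDiff ℝ (⊤ : ℕ∞) f) (t : ℝ) (x : Fin 3 → ℝ) :
    deriv (fun s => f (s, x)) t = Dv ((1:ℝ), (0 : Fin 3 → ℝ)) f (t, x) := by
  have hg : HasDerivAt (fun s : ℝ => ((s, x) : PT)) ((1:ℝ), (0 : Fin 3 → ℝ)) t :=
    (hasDerivAt_id t).prodMk (hasDerivAt_const t x)
  have := ((dd hf (t,x)).hasFDerivAt.comp_hasDerivAt t hg)
  exact this.deriv

lemma zero_on_closure {f : PT → ℝ} (hf : Continuous f) {U : Set PT}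
    (h0 : ∀ p ∈ U, f p = 0) {p : PT} (hp : p ∈ closure U) : f p = 0 :=
  Set.EqOn.closure (fun q hq => h0 q hq) hf continuous_const hp

lemma Dv_zero_closure {f : PT → ℝ} (hf : ContDiff ℝ (⊤ : ℕ∞) f) {U : Set PT} (hU : IsOpen U)
    (h0 : ∀ p ∈ U, f p = 0) (w : PT) {p : PT} (hp : p ∈ closure U) : Dv w f p = 0 := by
  refine zero_on_closure (Dv_continuous hf w) (fun q hq => ?_) hp
  have : f =ᶠ[nhds q] (fun _ => (0:ℝ)) := by
    filter_upwards [hU.mem_nhds hq] with r hr using h0 r hr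
  unfold Dv
  rw [this.fderiv_eq]
  simp

lemma tangential (n : Fin 3 → ℝ) (F : Set (Fin 3 → ℝ))
    (hrelopen : ∀ x ∈ F, ∃ ε > 0, ∀ y,
      dist y x < ε → (∑ i, n i * (y i - x i)) = 0 → y ∈ F)
    {f : PT → ℝ} (hf : ContDiff ℝ (⊤ : ℕ∞) f)
    (h0 : ∀ t : ℝ, 0 < t → ∀ x ∈ F, f (t, x) = 0)
    (w : PT) (hw : ∑ i, n i * w.2 i = 0) :
    ∀ t : ℝ, 0 ≤ t → ∀ x ∈ F, Dv w f (t, x) = 0 := by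
  have main : ∀ t : ℝ, 0 < t → ∀ x ∈ F, Dv w f (t, x) = 0 := by
    intro t ht x hx
    obtain ⟨ε, hε, hFmem⟩ := hrelopen x hx
    obtain ⟨s, v⟩ := w
    simp only at hw ⊢
    set δ : ℝ := min (t / (|s| + 1)) (ε / (‖v‖ + 1)) with hδdef
    have hs1 : (0:ℝ) < |s| + 1 := by positivity
    have hv1 : (0:ℝ) < ‖v‖ + 1 := by positivity
    have hδ : 0 < δ := lt_min (by positivity) (by positivity)
    have hcurve : HasDerivAt (fun r : ℝ => ((t + r * s, x + r • v) : PT)) (s, v) 0 := by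
      have h1 : HasDerivAt (fun r : ℝ => t + r * s) s 0 := by
        simpa using ((hasDerivAt_id (0:ℝ)).mul_const s).const_add t
      have h2 : HasDerivAt (fun r : ℝ => x + r • v) v 0 := by
        simpa using ((hasDerivAt_id (0:ℝ)).smul_const v).const_add x
      exact h1.prodMk h2
    have hc0 : ((t + 0 * s, x + (0:ℝ) • v) : PT) = (t, x) := by simp
    have hfd : HasFDerivAt f (fderiv ℝ f (t, x)) ((fun r : ℝ => ((t + r * s, x + r • v) : PT)) 0) := by
      simpa [hc0] using (dd hf (t, x)).hasFDerivAt
    have hg : HasDerivAt (fun r : ℝ => f (t + r * s, x + r • v)) (fderiv ℝ f (t, x) (s, v)) 0 :=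
      hfd.comp_hasDerivAt 0 hcurve
    have hzero : (fun r : ℝ => f (t + r * s, x + r • v)) =ᶠ[nhds 0] (fun _ => (0:ℝ)) := by
      filter_upwards [Metric.ball_mem_nhds (0:ℝ) hδ] with r hr
      have hrabs : |r| < δ := by simpa [Real.dist_eq] using hr
      have hrs : |r| * |s| < t := by
        calc |r| * |s| ≤ |r| * (|s| + 1) := by nlinarith [abs_nonneg r]
        _ < δ * (|s| + 1) := by nlinarith [abs_nonneg r]
        _ ≤ (t / (|s| + 1)) * (|s| + 1) := by
            have := min_le_left (t / (|s| + 1)) (ε / (‖v‖ + 1))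
            nlinarith
        _ = t := by field_simp
      have hrv : |r| * ‖v‖ < ε := by
        calc |r| * ‖v‖ ≤ |r| * (‖v‖ + 1) := by nlinarith [abs_nonneg r]
        _ < δ * (‖v‖ + 1) := by nlinarith [abs_nonneg r]
        _ ≤ (ε / (‖v‖ + 1)) * (‖v‖ + 1) := by
            have := min_le_right (t / (|s| + 1)) (ε / (‖v‖ + 1))
            nlinarith
        _ = ε := by field_simp
      apply h0
      · have : |r * s| < t := by rwa [abs_mul]
        have := abs_lt.mp this
        linarith
      · apply hFmem
        · have : dist (x + r • v) x = ‖r • v‖ := by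
            rw [dist_eq_norm]; congr 1; abel
          rw [this, norm_smul]
          simpa [Real.norm_eq_abs] using hrv
        · have : ∀ i, (x + r • v) i - x i = r * v i := by
            intro i; simp [mul_comm]
          simp only [this]
          calc ∑ i, n i * (r * v i) = r * ∑ i, n i * v i := by
                rw [Finset.mul_sum]; exact Finset.sum_congr rfl fun i _ => by ring
          _ = 0 := by rw [hw, mul_zero]
    have hderiv0 : fderiv ℝ f (t, x) (s, v) = 0 := by
      have h1 := hg.deriv
      have h2 : deriv (fun r : ℝ => f (t + r * s, x + r • v)) 0 = 0 := by
        rw [Filter.EventuallyEq.deriv_eq hzero]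
        simp
      rw [← h1, h2]
    exact hderiv0
  intro t ht x hx
  rcases lt_or_eq_of_le ht with h | h
  · exact main t h x hx
  · subst h
    have hcont : Continuous (fun u : ℝ => Dv w f (u, x)) :=
      (Dv_continuous hf w).comp (continuous_id.prodMk continuous_const)
    have hcl : (0:ℝ) ∈ closure (Set.Ioi (0:ℝ)) := by
      rw [closure_Ioi]; exact Set.self_mem_Ici
    exact Set.EqOn.closure (fun u hu => main u hu x hx) hcont continuous_const hcl

def w0 (i : Fin 3) : PT := ((0:ℝ), Pi.single i (1:ℝ))
def wtv : PT := ((1:ℝ), (0 : Fin 3 → ℝ))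

lemma Dv_decomp' (f : PT → ℝ) (v : Fin 3 → ℝ) (p : PT) :
    Dv ((0:ℝ), v) f p = ∑ q, v q * Dv (w0 q) f p := Dv_decomp f v p

noncomputable def Kf (κ : ℝ → (Fin 3 → ℝ) → Fin 3 → Fin 3 → ℝ) (i j : Fin 3) : PT → ℝ :=
  fun p => κ p.1 p.2 i j

noncomputable def Lf (lam : ℝ → (Fin 3 → ℝ) → Fin 3 → Fin 3 → Fin 3 → ℝ) (k i j : Fin 3) :
    PT → ℝ := fun p => lam p.1 p.2 k i j

noncomputable def Lsymf (lam : ℝ → (Fin 3 → ℝ) → Fin 3 → Fin 3 → Fin 3 → ℝ) (k i j : Fin 3) :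
    PT → ℝ := fun p => (Lf lam k i j p + Lf lam k j i p) / 2

noncomputable def Ktrf (κ : ℝ → (Fin 3 → ℝ) → Fin 3 → Fin 3 → ℝ) : PT → ℝ :=
  fun p => ∑ l, Kf κ l l p

noncomputable def Mf (κ : ℝ → (Fin 3 → ℝ) → Fin 3 → Fin 3 → ℝ) (j : Fin 3) : PT → ℝ :=
  fun p => (∑ l, Dv (w0 l) (Kf κ l j) p) - Dv (w0 j) (Ktrf κ) p

lemma Dv_combA {A : PT → ℝ} {G : Fin 3 → PT → ℝ} (hA : ContDiff ℝ (⊤ : ℕ∞) A)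
    (hG : ∀ k, ContDiff ℝ (⊤ : ℕ∞) (G k)) (c : ℝ) (w p) :
    Dv w (fun q => A q - c * ∑ k, G k q) p = Dv w A p - c * ∑ k, Dv w (G k) p := by
  have hS : ContDiff ℝ (⊤ : ℕ∞) (fun q => ∑ k, G k q) := ContDiff.sum fun k _ => hG k
  rw [Dv_sub hA (contDiff_const.mul hS), Dv_cmul hS, Dv_sumf _ hG]

lemma Dv_combB {A B C : PT → ℝ} (hA : ContDiff ℝ (⊤ : ℕ∞) A) (hB : ContDiff ℝ (⊤ : ℕ∞) B)
    (hC : ContDiff ℝ (⊤ : ℕ∞) C) (c : ℝ) (w p) :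
    Dv w (fun q => A q - c * ((B q - C q) / 2)) p
      = Dv w A p - c * ((Dv w B p - Dv w C p) / 2) := by
  have hBC : ContDiff ℝ (⊤ : ℕ∞) (fun q => B q - C q) := hB.sub hC
  rw [Dv_sub hA (contDiff_const.mul (hBC.div_const 2)), Dv_cmul (hBC.div_const 2),
    Dv_div_const hBC, Dv_sub hB hC]

noncomputable def Elamf (κ : ℝ → (Fin 3 → ℝ) → Fin 3 → Fin 3 → ℝ)
    (lam : ℝ → (Fin 3 → ℝ) → Fin 3 → Fin 3 → Fin 3 → ℝ) (k i j : Fin 3) : PT → ℝ := fun p =>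
  Dv wtv (Lf lam k i j) p
    - Real.sqrt 2 * ((Dv (w0 k) (Kf κ i j) p - Dv (w0 i) (Kf κ k j) p) / 2)

noncomputable def Eκf (κ : ℝ → (Fin 3 → ℝ) → Fin 3 → Fin 3 → ℝ)
    (lam : ℝ → (Fin 3 → ℝ) → Fin 3 → Fin 3 → Fin 3 → ℝ) (i j : Fin 3) : PT → ℝ := fun p =>
  Dv wtv (Kf κ i j) p - Real.sqrt 2 * (∑ k, Dv (w0 k) (Lsymf lam k i j) p)

noncomputable def B1f (κ : ℝ → (Fin 3 → ℝ) → Fin 3 → Fin 3 → ℝ) (n : Fin 3 → ℝ)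
    (τ : Fin 3 → Fin 3 → ℝ) (k : Fin 3) : PT → ℝ := fun p =>
  ∑ z : Fin 3 × Fin 3, n z.1 * τ z.2 k * Kf κ z.1 z.2 p

noncomputable def f3f (κ : ℝ → (Fin 3 → ℝ) → Fin 3 → Fin 3 → ℝ) (n : Fin 3 → ℝ)
    (τ : Fin 3 → Fin 3 → ℝ) (k : Fin 3) : PT → ℝ := fun p =>
  ∑ z : Fin 3 × Fin 3, n z.1 * τ z.2 k * Dv wtv (Kf κ z.1 z.2) p

noncomputable def B2f (lam : ℝ → (Fin 3 → ℝ) → Fin 3 → Fin 3 → Fin 3 → ℝ) (n : Fin 3 → ℝ)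
    (τ : Fin 3 → Fin 3 → ℝ) (l m : Fin 3) : PT → ℝ := fun p =>
  ∑ z : Fin 3 × Fin 3 × Fin 3, n z.1 * τ z.2.1 l * τ z.2.2 m * Lf lam z.1 z.2.1 z.2.2 p

noncomputable def g2f (κ : ℝ → (Fin 3 → ℝ) → Fin 3 → Fin 3 → ℝ) (n : Fin 3 → ℝ)
    (τ : Fin 3 → Fin 3 → ℝ) (l m : Fin 3) : PT → ℝ := fun p =>
  ∑ z : Fin 3 × Fin 3 × Fin 3, n z.1 * τ z.2.1 l * τ z.2.2 m *
    (Dv (w0 z.1) (Kf κ z.2.1 z.2.2) p - Dv (w0 z.2.1) (Kf κ z.1 z.2.2) p)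

noncomputable def Gf (κ : ℝ → (Fin 3 → ℝ) → Fin 3 → Fin 3 → ℝ) (n : Fin 3 → ℝ) : PT → ℝ :=
  fun p => ∑ j, n j * Mf κ j p

end AAproof

set_option maxHeartbeats 4000000 in
/-- For a smooth solution of the homogeneous linearized
Alekseenko–Arnold system (`α ≡ 0`, `β ≡ 0`) on a bounded open polyhedron satisfying
the boundary conditions `n^i τ^{jk} κ_{ij} = 0`, `n^k τ^{il} τ^{jm} λ_{kij} = 0` on an
open face `F` with exterior unit normal `n`, the identity
`Ċ_j n^l ∂_l C^j + n^j Ċ_j ∂_l C^l = 0` holds on `F` for all `t ≥ 0`,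
where `C_j = ∂^l κ_{lj} − ∂_j κ_l{}^l`. -/
theorem AA_face_identity
    (Ω : Set (Fin 3 → ℝ)) (hΩopen : IsOpen Ω) (hΩbdd : Bornology.IsBounded Ω)
    -- an open face F of ∂Ω with exterior unit normal n
    (F : Set (Fin 3 → ℝ)) (n : Fin 3 → ℝ)
    (hface_sub : F ⊆ frontier Ω)
    (hunit : ∑ i, n i * n i = 1)
    (hplanar : ∀ x ∈ F, ∀ y ∈ F, ∑ i, n i * (x i - y i) = 0)
    (hrelopen : ∀ x ∈ F, ∃ ε > 0, ∀ y,
      dist y x < ε → (∑ i, n i * (y i - x i)) = 0 → y ∈ F)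
    (hexterior : ∀ x ∈ F, ∃ ε > 0, ∀ s : ℝ, 0 < s → s < ε →
      x + s • n ∉ closure Ω ∧ x - s • n ∈ Ω)
    (τ : Fin 3 → Fin 3 → ℝ) (hτ : ∀ i j, τ i j = (if i = j then (1:ℝ) else 0) - n i * n j)
    -- the fields
    (κ : ℝ → (Fin 3 → ℝ) → Fin 3 → Fin 3 → ℝ)
    (lam : ℝ → (Fin 3 → ℝ) → Fin 3 → Fin 3 → Fin 3 → ℝ)
    (hκsmooth : ∀ i j, ContDiff ℝ (⊤ : ℕ∞) (fun q : ℝ × (Fin 3 → ℝ) => κ q.1 q.2 i j))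
    (hlamsmooth : ∀ k i j, ContDiff ℝ (⊤ : ℕ∞) (fun q : ℝ × (Fin 3 → ℝ) => lam q.1 q.2 k i j))
    (hκsym : ∀ t x i j, κ t x i j = κ t x j i)
    (hlamasym : ∀ t x k i j, lam t x k i j = -lam t x i k j)
    (hlamcyc : ∀ t x k i j, lam t x k i j + lam t x j k i + lam t x i j k = 0)
    -- the homogeneous AA evolution equations on Ω
    (hevκ : ∀ t : ℝ, 0 ≤ t → ∀ x ∈ Ω, ∀ i j,
      (1 / Real.sqrt 2) * deriv (fun s => κ s x i j) t =
        ∑ k, pd k (fun y => (lam t y k i j + lam t y k j i) / 2) x)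
    (hevlam : ∀ t : ℝ, 0 ≤ t → ∀ x ∈ Ω, ∀ k i j,
      (1 / Real.sqrt 2) * deriv (fun s => lam s x k i j) t =
        (pd k (fun y => κ t y i j) x - pd i (fun y => κ t y k j) x) / 2)
    -- the boundary conditions on the face F
    (hbc1 : ∀ t : ℝ, 0 ≤ t → ∀ x ∈ F, ∀ k,
      ∑ i, ∑ j, n i * τ j k * κ t x i j = 0)
    (hbc2 : ∀ t : ℝ, 0 ≤ t → ∀ x ∈ F, ∀ l m,
      ∑ k, ∑ i, ∑ j, n k * τ i l * τ j m * lam t x k i j = 0) :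
    ∀ t : ℝ, 0 ≤ t → ∀ x ∈ F,
      (∑ j, deriv (fun s => momC (κ s) x j) t *
          (∑ l, n l * pd l (fun y => momC (κ t) y j) x))
        + (∑ j, n j * deriv (fun s => momC (κ s) x j) t) *
            (∑ l, pd l (fun y => momC (κ t) y l) x) = 0 := by
  intro t ht x hx
  -- smoothness facts
  have hKsm : ∀ i j, ContDiff ℝ (⊤ : ℕ∞) (Kf κ i j) := fun i j => hκsmooth i j
  have hLsm : ∀ k i j, ContDiff ℝ (⊤ : ℕ∞) (Lf lam k i j) := fun k i j => hlamsmooth k i j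
  have hLsymsm : ∀ k i j, ContDiff ℝ (⊤ : ℕ∞) (Lsymf lam k i j) :=
    fun k i j => ((hLsm k i j).add (hLsm k j i)).div_const 2
  have hKtrsm : ContDiff ℝ (⊤ : ℕ∞) (Ktrf κ) := ContDiff.sum fun l _ => hKsm l l
  have hMsm : ∀ j, ContDiff ℝ (⊤ : ℕ∞) (Mf κ j) := fun j =>
    (ContDiff.sum fun l _ => Dv_contDiff (hKsm l j) (w0 l)).sub (Dv_contDiff hKtrsm (w0 j))
  have hUopen : IsOpen ((Set.Ioi (0:ℝ)) ×ˢ Ω) := isOpen_Ioi.prod hΩopen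
  have hclos : ∀ t' : ℝ, 0 ≤ t' → ∀ x' ∈ F,
      ((t', x') : PT) ∈ closure ((Set.Ioi (0:ℝ)) ×ˢ Ω) := by
    intro t' ht' x' hx'
    rw [closure_prod_eq]
    exact ⟨by rw [closure_Ioi]; exact ht', frontier_subset_closure (hface_sub hx')⟩
  have hp₀ : ((t, x) : PT) ∈ closure ((Set.Ioi (0:ℝ)) ×ˢ Ω) := hclos t ht x hx
  have hs2 : Real.sqrt 2 * Real.sqrt 2 = 2 := Real.mul_self_sqrt (by norm_num)
  have hsne : Real.sqrt 2 / 2 ≠ 0 := by positivity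
  have h12 : (1:ℝ) / Real.sqrt 2 = Real.sqrt 2 / 2 := by
    rw [div_eq_div_iff (by positivity) (by norm_num : (2:ℝ) ≠ 0)]
    linarith [hs2]
  -- K symmetry
  have hK10 : Kf κ 1 0 = Kf κ 0 1 := funext fun p => hκsym p.1 p.2 1 0
  have hK20 : Kf κ 2 0 = Kf κ 0 2 := funext fun p => hκsym p.1 p.2 2 0
  have hK21 : Kf κ 2 1 = Kf κ 1 2 := funext fun p => hκsym p.1 p.2 2 1
  -- derivative swaps at (t,x)
  have hsw10 : ∀ i j, Dv (w0 1) (Dv (w0 0) (Kf κ i j)) (t, x)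
      = Dv (w0 0) (Dv (w0 1) (Kf κ i j)) (t, x) :=
    fun i j => Dv_comm (hKsm i j) (w0 1) (w0 0) (t, x)
  have hsw20 : ∀ i j, Dv (w0 2) (Dv (w0 0) (Kf κ i j)) (t, x)
      = Dv (w0 0) (Dv (w0 2) (Kf κ i j)) (t, x) :=
    fun i j => Dv_comm (hKsm i j) (w0 2) (w0 0) (t, x)
  have hsw21 : ∀ i j, Dv (w0 2) (Dv (w0 1) (Kf κ i j)) (t, x)
      = Dv (w0 1) (Dv (w0 2) (Kf κ i j)) (t, x) :=
    fun i j => Dv_comm (hKsm i j) (w0 2) (w0 1) (t, x)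
  -- tangential projector facts
  have hvτ : ∀ c, (∑ i, n i * τ c i) = 0 := by
    intro c
    simp only [hτ]
    rw [Fin.sum_univ_three] at hunit ⊢
    fin_cases c
    · simp
      linear_combination (-(n 0)) * hunit
    · simp
      linear_combination (-(n 1)) * hunit
    · simp
      linear_combination (-(n 2)) * hunit
  -- translation : momC in terms of Mf
  have hmom : ∀ s y j, momC (κ s) y j = Mf κ j (s, y) := by
    intro s y j
    unfold momC Mf
    congr 1
    · exact Finset.sum_congr rfl fun l _ => pd_slice (Kf κ l j) (hKsm l j) s y l
    · exact pd_slice (Ktrf κ) hKtrsm s y j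
  have ht1 : ∀ j, deriv (fun s => momC (κ s) x j) t = Dv wtv (Mf κ j) (t, x) := by
    intro j
    rw [show (fun s => momC (κ s) x j) = fun s => Mf κ j (s, x) from funext fun s => hmom s x j]
    exact deriv_slice (Mf κ j) (hMsm j) t x
  have ht2 : ∀ l j, pd l (fun y => momC (κ t) y j) x = Dv (w0 l) (Mf κ j) (t, x) := by
    intro l j
    rw [show (fun y => momC (κ t) y j) = fun y => Mf κ j (t, y) from funext fun y => hmom t y j]
    exact pd_slice (Mf κ j) (hMsm j) t x l
  -- evolution equations in Dv form, on U
  have hElam0 : ∀ k i j, ∀ p ∈ (Set.Ioi (0:ℝ)) ×ˢ Ω, Elamf κ lam k i j p = 0 := by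
    rintro k i j ⟨s, y⟩ hp
    obtain ⟨hs, hy⟩ := hp
    have h := hevlam s (le_of_lt hs) y hy k i j
    rw [show deriv (fun s' => lam s' y k i j) s = Dv wtv (Lf lam k i j) (s, y) from
      deriv_slice (Lf lam k i j) (hLsm k i j) s y] at h
    rw [show pd k (fun y' => κ s y' i j) y = Dv (w0 k) (Kf κ i j) (s, y) from
      pd_slice (Kf κ i j) (hKsm i j) s y k] at h
    rw [show pd i (fun y' => κ s y' k j) y = Dv (w0 i) (Kf κ k j) (s, y) from
      pd_slice (Kf κ k j) (hKsm k j) s y i] at h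
    unfold Elamf
    rw [h12] at h
    linear_combination Real.sqrt 2 * h - (Dv wtv (Lf lam k i j) (s, y) / 2) * hs2
  have hEκ0 : ∀ i j, ∀ p ∈ (Set.Ioi (0:ℝ)) ×ˢ Ω, Eκf κ lam i j p = 0 := by
    rintro i j ⟨s, y⟩ hp
    obtain ⟨hs, hy⟩ := hp
    have h := hevκ s (le_of_lt hs) y hy i j
    rw [show deriv (fun s' => κ s' y i j) s = Dv wtv (Kf κ i j) (s, y) from
      deriv_slice (Kf κ i j) (hKsm i j) s y] at h
    rw [Finset.sum_congr rfl (fun k _ => show pd k (fun y' => (lam s y' k i j + lam s y' k j i) / 2) y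
      = Dv (w0 k) (Lsymf lam k i j) (s, y) from pd_slice (Lsymf lam k i j) (hLsymsm k i j) s y k)] at h
    unfold Eκf
    rw [h12] at h
    linear_combination Real.sqrt 2 * h - (Dv wtv (Kf κ i j) (s, y) / 2) * hs2
  have hElamsm : ∀ k i j, ContDiff ℝ (⊤ : ℕ∞) (Elamf κ lam k i j) := by
    intro k i j
    unfold Elamf
    exact (Dv_contDiff (hLsm k i j) wtv).sub (contDiff_const.mul
      (((Dv_contDiff (hKsm i j) (w0 k)).sub (Dv_contDiff (hKsm k j) (w0 i))).div_const 2))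
  have hEκsm : ∀ i j, ContDiff ℝ (⊤ : ℕ∞) (Eκf κ lam i j) := by
    intro i j
    unfold Eκf
    exact (Dv_contDiff (hKsm i j) wtv).sub (contDiff_const.mul
      (ContDiff.sum fun k _ => Dv_contDiff (hLsymsm k i j) (w0 k)))
  -- pointwise value of λ̇ on the closure
  have hdtl : ∀ p ∈ closure ((Set.Ioi (0:ℝ)) ×ˢ Ω), ∀ k i j,
      Dv wtv (Lf lam k i j) p
        = Real.sqrt 2 * ((Dv (w0 k) (Kf κ i j) p - Dv (w0 i) (Kf κ k j) p) / 2) := by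
    intro p hp k i j
    have h := zero_on_closure (hElamsm k i j).continuous (hElam0 k i j) hp
    unfold Elamf at h
    linarith
  -- first spatial derivative of λ̇ on the closure
  have hrep : ∀ p ∈ closure ((Set.Ioi (0:ℝ)) ×ˢ Ω), ∀ q k i j,
      Dv (w0 q) (Dv wtv (Lf lam k i j)) p
        = Real.sqrt 2 * ((Dv (w0 q) (Dv (w0 k) (Kf κ i j)) p
            - Dv (w0 q) (Dv (w0 i) (Kf κ k j)) p) / 2) := by
    intro p hp q k i j
    have h := Dv_zero_closure (hElamsm k i j) hUopen (hElam0 k i j) (w0 q) hp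
    unfold Elamf at h
    rw [Dv_combB (Dv_contDiff (hLsm k i j) wtv) (Dv_contDiff (hKsm i j) (w0 k))
      (Dv_contDiff (hKsm k j) (w0 i)) (Real.sqrt 2) (w0 q) p] at h
    linarith
  -- function-level time derivative of Lsymf
  have hLsymt : ∀ k i j, Dv wtv (Lsymf lam k i j)
      = fun p => (Dv wtv (Lf lam k i j) p + Dv wtv (Lf lam k j i) p) / 2 := by
    intro k i j
    funext p
    unfold Lsymf
    rw [Dv_div_const ((hLsm k i j).add (hLsm k j i)) 2 wtv p,
      Dv_add (hLsm k i j) (hLsm k j i) wtv p]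
  -- second time derivative of κ at (t,x)
  have hdtt : ∀ i j, Dv wtv (Dv wtv (Kf κ i j)) (t, x)
      = ∑ k', (Dv (w0 k') (Dv (w0 k') (Kf κ i j)) (t, x)
          + Dv (w0 k') (Dv (w0 k') (Kf κ j i)) (t, x)
          - Dv (w0 k') (Dv (w0 i) (Kf κ k' j)) (t, x)
          - Dv (w0 k') (Dv (w0 j) (Kf κ k' i)) (t, x)) / 2 := by
    intro i j
    have h := Dv_zero_closure (hEκsm i j) hUopen (hEκ0 i j) wtv hp₀
    unfold Eκf at h
    rw [Dv_combA (Dv_contDiff (hKsm i j) wtv)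
      (fun k => Dv_contDiff (hLsymsm k i j) (w0 k)) (Real.sqrt 2) wtv (t, x)] at h
    have hval : ∀ k, Dv wtv (Dv (w0 k) (Lsymf lam k i j)) (t, x)
        = Real.sqrt 2 * (((Dv (w0 k) (Dv (w0 k) (Kf κ i j)) (t, x)
              - Dv (w0 k) (Dv (w0 i) (Kf κ k j)) (t, x)) / 2
            + (Dv (w0 k) (Dv (w0 k) (Kf κ j i)) (t, x)
              - Dv (w0 k) (Dv (w0 j) (Kf κ k i)) (t, x)) / 2) / 2) := by
      intro k
      rw [Dv_comm (hLsymsm k i j) wtv (w0 k) (t, x), hLsymt k i j,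
        Dv_div_const ((Dv_contDiff (hLsm k i j) wtv).add (Dv_contDiff (hLsm k j i) wtv)) 2 (w0 k) (t, x),
        Dv_add (Dv_contDiff (hLsm k i j) wtv) (Dv_contDiff (hLsm k j i) wtv) (w0 k) (t, x),
        hrep (t, x) hp₀ k k i j, hrep (t, x) hp₀ k k j i]
      ring
    rw [Finset.sum_congr rfl (fun k _ => hval k)] at h
    rw [Fin.sum_univ_three] at h ⊢
    linear_combination h + (((Dv (w0 0) (Dv (w0 0) (Kf κ i j)) (t, x)
        - Dv (w0 0) (Dv (w0 i) (Kf κ 0 j)) (t, x)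
        + Dv (w0 0) (Dv (w0 0) (Kf κ j i)) (t, x)
        - Dv (w0 0) (Dv (w0 j) (Kf κ 0 i)) (t, x))
      + (Dv (w0 1) (Dv (w0 1) (Kf κ i j)) (t, x)
        - Dv (w0 1) (Dv (w0 i) (Kf κ 1 j)) (t, x)
        + Dv (w0 1) (Dv (w0 1) (Kf κ j i)) (t, x)
        - Dv (w0 1) (Dv (w0 j) (Kf κ 1 i)) (t, x))
      + (Dv (w0 2) (Dv (w0 2) (Kf κ i j)) (t, x)
        - Dv (w0 2) (Dv (w0 i) (Kf κ 2 j)) (t, x)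
        + Dv (w0 2) (Dv (w0 2) (Kf κ j i)) (t, x)
        - Dv (w0 2) (Dv (w0 j) (Kf κ 2 i)) (t, x))) / 4) * hs2
  -- smoothness of the boundary combinations
  have hB1fsm : ∀ k, ContDiff ℝ (⊤ : ℕ∞) (B1f κ n τ k) := by
    intro k; unfold B1f
    exact ContDiff.sum fun z _ => contDiff_const.mul (hKsm z.1 z.2)
  have hf3sm : ∀ k, ContDiff ℝ (⊤ : ℕ∞) (f3f κ n τ k) := by
    intro k; unfold f3f
    exact ContDiff.sum fun z _ => contDiff_const.mul (Dv_contDiff (hKsm z.1 z.2) wtv)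
  have hB2fsm : ∀ l m, ContDiff ℝ (⊤ : ℕ∞) (B2f lam n τ l m) := by
    intro l m; unfold B2f
    exact ContDiff.sum fun z _ => contDiff_const.mul (hLsm z.1 z.2.1 z.2.2)
  have hg2sm : ∀ l m, ContDiff ℝ (⊤ : ℕ∞) (g2f κ n τ l m) := by
    intro l m; unfold g2f
    exact ContDiff.sum fun z _ => contDiff_const.mul
      ((Dv_contDiff (hKsm z.2.1 z.2.2) (w0 z.1)).sub (Dv_contDiff (hKsm z.1 z.2.2) (w0 z.2.1)))
  -- boundary conditions, flattened
  have hB1f0 : ∀ k, ∀ t' : ℝ, 0 < t' → ∀ x' ∈ F, B1f κ n τ k (t', x') = 0 := by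
    intro k t' ht' x' hx'
    have h := hbc1 t' (le_of_lt ht') x' hx' k
    unfold B1f
    rw [Fintype.sum_prod_type]
    exact h
  have hB2f0 : ∀ l m, ∀ t' : ℝ, 0 < t' → ∀ x' ∈ F, B2f lam n τ l m (t', x') = 0 := by
    intro l m t' ht' x' hx'
    have h := hbc2 t' (le_of_lt ht') x' hx' l m
    unfold B2f
    rw [Fintype.sum_prod_type]
    rw [Finset.sum_congr rfl (fun k _ => Fintype.sum_prod_type
      (f := fun z : Fin 3 × Fin 3 => n k * τ z.1 l * τ z.2 m * Lf lam k z.1 z.2 (t', x')))]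
    exact h
  -- G3 chain
  have hf30 : ∀ k, ∀ t' : ℝ, 0 < t' → ∀ x' ∈ F, f3f κ n τ k (t', x') = 0 := by
    intro k t' ht' x' hx'
    have h := tangential n F hrelopen (hB1fsm k) (hB1f0 k) wtv (by simp [wtv]) t' (le_of_lt ht') x' hx'
    rw [show Dv wtv (B1f κ n τ k) (t', x') = f3f κ n τ k (t', x') from by
      unfold B1f f3f
      exact Dv_lin (fun z : Fin 3 × Fin 3 => n z.1 * τ z.2 k) (fun z => Kf κ z.1 z.2)
        (fun z => hKsm z.1 z.2) wtv (t', x')] at h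
    exact h
  have hG3 : ∀ k, ∑ z : Fin 3 × Fin 3, n z.1 * τ z.2 k * Dv wtv (Dv wtv (Kf κ z.1 z.2)) (t, x) = 0 := by
    intro k
    have h := tangential n F hrelopen (hf3sm k) (hf30 k) wtv (by simp [wtv]) t ht x hx
    rw [show Dv wtv (f3f κ n τ k) (t, x)
        = ∑ z : Fin 3 × Fin 3, n z.1 * τ z.2 k * Dv wtv (Dv wtv (Kf κ z.1 z.2)) (t, x) from by
      unfold f3f
      exact Dv_lin (fun z : Fin 3 × Fin 3 => n z.1 * τ z.2 k) (fun z => Dv wtv (Kf κ z.1 z.2))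
        (fun z => Dv_contDiff (hKsm z.1 z.2) wtv) wtv (t, x)] at h
    exact h
  -- G2 chain
  have hg20 : ∀ l m, ∀ t' : ℝ, 0 < t' → ∀ x' ∈ F, g2f κ n τ l m (t', x') = 0 := by
    intro l m t' ht' x' hx'
    have hp' : ((t', x') : PT) ∈ closure ((Set.Ioi (0:ℝ)) ×ˢ Ω) := hclos t' (le_of_lt ht') x' hx'
    have h1 := tangential n F hrelopen (hB2fsm l m) (hB2f0 l m) wtv (by simp [wtv]) t' (le_of_lt ht') x' hx'
    rw [show Dv wtv (B2f lam n τ l m) (t', x')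
        = ∑ z : Fin 3 × Fin 3 × Fin 3, n z.1 * τ z.2.1 l * τ z.2.2 m *
            Dv wtv (Lf lam z.1 z.2.1 z.2.2) (t', x') from by
      unfold B2f
      exact Dv_lin (fun z : Fin 3 × Fin 3 × Fin 3 => n z.1 * τ z.2.1 l * τ z.2.2 m)
        (fun z => Lf lam z.1 z.2.1 z.2.2) (fun z => hLsm z.1 z.2.1 z.2.2) wtv (t', x')] at h1
    have h2 : Real.sqrt 2 / 2 * g2f κ n τ l m (t', x') = 0 := by
      unfold g2f
      rw [Finset.mul_sum]
      rw [Finset.sum_congr rfl (fun z _ => show Real.sqrt 2 / 2 * (n z.1 * τ z.2.1 l * τ z.2.2 m *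
          (Dv (w0 z.1) (Kf κ z.2.1 z.2.2) (t', x') - Dv (w0 z.2.1) (Kf κ z.1 z.2.2) (t', x')))
          = n z.1 * τ z.2.1 l * τ z.2.2 m * Dv wtv (Lf lam z.1 z.2.1 z.2.2) (t', x') from by
        rw [hdtl (t', x') hp' z.1 z.2.1 z.2.2]; ring)]
      exact h1
    exact (mul_eq_zero.mp h2).resolve_left hsne
  have hG2 : ∀ c l m, ∑ q, τ c q * ∑ z : Fin 3 × Fin 3 × Fin 3,
      n z.1 * τ z.2.1 l * τ z.2.2 m *
        (Dv (w0 q) (Dv (w0 z.1) (Kf κ z.2.1 z.2.2)) (t, x)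
          - Dv (w0 q) (Dv (w0 z.2.1) (Kf κ z.1 z.2.2)) (t, x)) = 0 := by
    intro c l m
    have h := tangential n F hrelopen (hg2sm l m) (hg20 l m) ((0:ℝ), fun q => τ c q)
      (hvτ c) t ht x hx
    rw [Dv_decomp' (g2f κ n τ l m) (fun q => τ c q) (t, x)] at h
    have hq : ∀ q, Dv (w0 q) (g2f κ n τ l m) (t, x)
        = ∑ z : Fin 3 × Fin 3 × Fin 3, n z.1 * τ z.2.1 l * τ z.2.2 m *
            (Dv (w0 q) (Dv (w0 z.1) (Kf κ z.2.1 z.2.2)) (t, x)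
              - Dv (w0 q) (Dv (w0 z.2.1) (Kf κ z.1 z.2.2)) (t, x)) := by
      intro q
      unfold g2f
      rw [Dv_lin (fun z : Fin 3 × Fin 3 × Fin 3 => n z.1 * τ z.2.1 l * τ z.2.2 m)
        (fun z => fun p => Dv (w0 z.1) (Kf κ z.2.1 z.2.2) p - Dv (w0 z.2.1) (Kf κ z.1 z.2.2) p)
        (fun z => (Dv_contDiff (hKsm z.2.1 z.2.2) (w0 z.1)).sub (Dv_contDiff (hKsm z.1 z.2.2) (w0 z.2.1)))
        (w0 q) (t, x)]
      exact Finset.sum_congr rfl fun z _ => by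
        rw [Dv_sub (Dv_contDiff (hKsm z.2.1 z.2.2) (w0 z.1)) (Dv_contDiff (hKsm z.1 z.2.2) (w0 z.2.1))
          (w0 q) (t, x)]
    simp only [hq] at h
    exact h
  -- Step I : n·M vanishes on the face
  have hMval : ∀ j p, Mf κ j p = (∑ l, Dv (w0 l) (Kf κ l j) p) - ∑ l, Dv (w0 j) (Kf κ l l) p := by
    intro j p
    unfold Mf
    rw [show Dv (w0 j) (Ktrf κ) p = ∑ l, Dv (w0 j) (Kf κ l l) p from by
      unfold Ktrf
      exact Dv_sumf (fun l => Kf κ l l) (fun l => hKsm l l) (w0 j) p]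
  have hStepI : ∀ t' : ℝ, 0 < t' → ∀ x' ∈ F, Gf κ n (t', x') = 0 := by
    intro t' ht' x' hx'
    have e00 := hg20 0 0 t' ht' x' hx'
    have e11 := hg20 1 1 t' ht' x' hx'
    have e22 := hg20 2 2 t' ht' x' hx'
    unfold g2f at e00 e11 e22
    unfold Gf
    simp only [hMval]
    simp only [Fintype.sum_prod_type, Fin.sum_univ_three, hτ] at e00 e11 e22 ⊢
    simp only [Fin.reduceEq, reduceIte] at e00 e11 e22 ⊢
    simp only [hK10, hK20, hK21] at e00 e11 e22 ⊢
    linear_combination (-1 : ℝ) * e00 - e11 - e22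
  -- Step II : time derivative of n·M vanishes at (t,x)
  have hGsm : ContDiff ℝ (⊤ : ℕ∞) (Gf κ n) := ContDiff.sum fun j _ => contDiff_const.mul (hMsm j)
  have hII : ∑ j, n j * Dv wtv (Mf κ j) (t, x) = 0 := by
    have h := tangential n F hrelopen hGsm hStepI wtv (by simp [wtv]) t ht x hx
    rw [show Dv wtv (Gf κ n) (t, x) = ∑ j, n j * Dv wtv (Mf κ j) (t, x) from by
      unfold Gf
      exact Dv_lin n (Mf κ) hMsm wtv (t, x)] at h
    exact h
  -- spatial derivatives of M at (t,x)
  have hDxM : ∀ l j, Dv (w0 l) (Mf κ j) (t, x)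
      = (∑ l', Dv (w0 l) (Dv (w0 l') (Kf κ l' j)) (t, x))
        - ∑ l', Dv (w0 l) (Dv (w0 j) (Kf κ l' l')) (t, x) := by
    intro l j
    have hfun : Mf κ j = fun p => (∑ l', Dv (w0 l') (Kf κ l' j) p)
        - ∑ l', Dv (w0 j) (Kf κ l' l') p := funext fun p => hMval j p
    rw [hfun, Dv_sub (ContDiff.sum fun l' _ => Dv_contDiff (hKsm l' j) (w0 l'))
      (ContDiff.sum fun l' _ => Dv_contDiff (hKsm l' l') (w0 j)) (w0 l) (t, x),
      Dv_sumf (fun l' => Dv (w0 l') (Kf κ l' j)) (fun l' => Dv_contDiff (hKsm l' j) (w0 l')) (w0 l) (t, x),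
      Dv_sumf (fun l' => Dv (w0 j) (Kf κ l' l')) (fun l' => Dv_contDiff (hKsm l' l') (w0 j)) (w0 l) (t, x)]
  -- Step III : tangential projection of the normal derivative of M vanishes
  have hG3' := hG3
  simp only [hdtt] at hG3'
  have key0 : (∑ l, n l * Dv (w0 l) (Mf κ 0) (t, x))
      = n 0 * ∑ m, n m * ∑ l, n l * Dv (w0 l) (Mf κ m) (t, x) := by
    have A := hG3' 0
    have B0 := hG2 0 0 0
    have B1 := hG2 1 1 0
    have B2 := hG2 2 2 0
    have C1 := hG2 0 1 1
    have C2 := hG2 0 2 2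
    simp only [hDxM]
    simp only [Fintype.sum_prod_type, Fin.sum_univ_three, hτ] at A B0 B1 B2 C1 C2 ⊢
    simp only [Fin.reduceEq, reduceIte] at A B0 B1 B2 C1 C2 ⊢
    simp only [hK10, hK20, hK21] at A B0 B1 B2 C1 C2 ⊢
    simp only [hsw10, hsw20, hsw21] at A B0 B1 B2 C1 C2 ⊢
    linear_combination (2:ℝ) * A + 2 * B0 + 2 * B1 + 2 * B2 - B0 - C1 - C2
  have key1 : (∑ l, n l * Dv (w0 l) (Mf κ 1) (t, x))
      = n 1 * ∑ m, n m * ∑ l, n l * Dv (w0 l) (Mf κ m) (t, x) := by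
    have A := hG3' 1
    have B0 := hG2 0 0 1
    have B1 := hG2 1 1 1
    have B2 := hG2 2 2 1
    have C0 := hG2 1 0 0
    have C2 := hG2 1 2 2
    simp only [hDxM]
    simp only [Fintype.sum_prod_type, Fin.sum_univ_three, hτ] at A B0 B1 B2 C0 C2 ⊢
    simp only [Fin.reduceEq, reduceIte] at A B0 B1 B2 C0 C2 ⊢
    simp only [hK10, hK20, hK21] at A B0 B1 B2 C0 C2 ⊢
    simp only [hsw10, hsw20, hsw21] at A B0 B1 B2 C0 C2 ⊢
    linear_combination (2:ℝ) * A + 2 * B0 + 2 * B1 + 2 * B2 - C0 - B1 - C2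
  have key2 : (∑ l, n l * Dv (w0 l) (Mf κ 2) (t, x))
      = n 2 * ∑ m, n m * ∑ l, n l * Dv (w0 l) (Mf κ m) (t, x) := by
    have A := hG3' 2
    have B0 := hG2 0 0 2
    have B1 := hG2 1 1 2
    have B2 := hG2 2 2 2
    have C0 := hG2 2 0 0
    have C1 := hG2 2 1 1
    simp only [hDxM]
    simp only [Fintype.sum_prod_type, Fin.sum_univ_three, hτ] at A B0 B1 B2 C0 C1 ⊢
    simp only [Fin.reduceEq, reduceIte] at A B0 B1 B2 C0 C1 ⊢
    simp only [hK10, hK20, hK21] at A B0 B1 B2 C0 C1 ⊢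
    simp only [hsw10, hsw20, hsw21] at A B0 B1 B2 C0 C1 ⊢
    linear_combination (2:ℝ) * A + 2 * B0 + 2 * B1 + 2 * B2 - C0 - C1 - B2
  -- final assembly
  simp only [ht1, ht2]
  have k0 := key0
  have k1 := key1
  have k2 := key2
  simp only [Fin.sum_univ_three] at hII k0 k1 k2 ⊢
  linear_combination Dv wtv (Mf κ 0) (t, x) * k0 + Dv wtv (Mf κ 1) (t, x) * k1
    + Dv wtv (Mf κ 2) (t, x) * k2
    + ((n 0 * (n 0 * Dv (w0 0) (Mf κ 0) (t, x) + n 1 * Dv (w0 1) (Mf κ 0) (t, x)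
          + n 2 * Dv (w0 2) (Mf κ 0) (t, x))
        + n 1 * (n 0 * Dv (w0 0) (Mf κ 1) (t, x) + n 1 * Dv (w0 1) (Mf κ 1) (t, x)
          + n 2 * Dv (w0 2) (Mf κ 1) (t, x))
        + n 2 * (n 0 * Dv (w0 0) (Mf κ 2) (t, x) + n 1 * Dv (w0 1) (Mf κ 2) (t, x)
          + n 2 * Dv (w0 2) (Mf κ 2) (t, x)))
      + (Dv (w0 0) (Mf κ 0) (t, x) + Dv (w0 1) (Mf κ 1) (t, x) + Dv (w0 2) (Mf κ 2) (t, x))) * hII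
end
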